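/- arXiv:1810.03299 — 5 statements merged into one kernel-verified Lean document; each statement's English description precedes it below -/
import Mathlib

section
/- Let n, m be positive integers with 1 ≤ m ≤ n/3. For every tree T with n vertices and every vertex t ∈ V(T), there exist two subtrees T₁ and T₂ which divide T such that t ∈ V(T₁) and m ≤ |T₂| ≤ 3m. -/
/-- Two subtrees (connected subgraphs) `A` and `B` *divide* the tree `S` if together
they cover `S` and they intersect in exactly one vertex. -/
def Divides {V : Type*} {S : SimpleGraph V} (A B : S.Subgraph) : Prop :=
  A.Connected ∧ B.Connected ∧ A ⊔ B = ⊤ ∧ ∃ v, A.verts ∩ B.verts = {v}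

/-!
Call `s` a branch at `v` if every edge leaving `s` starts at `v`; then `G[s]` and
`G[sᶜ ∪ {v}]` divide the tree. Among branches with at least `m` vertices that meet `t` at most in
their root, take one, `s` at `v`, with as few vertices as possible. A component `C` of
`G[s \ {v}]` is again such a candidate, rooted at its unique neighbour of `v` (acyclicity), so
`|C| < m` by minimality. If `|s| ≥ 2m`, then `s \ C` would be a smaller candidate. Hence
`m ≤ |s| < 2m`.
-/

namespace SimpleGraph

variable {V : Type*} {G : SimpleGraph V} {s : Set V} {v w : V}

/-- `G[s]` and `G[sᶜ ∪ {v}]` become the subtrees `T₂` and `T₁` of the division. -/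
structure IsBranchAt (G : SimpleGraph V) (s : Set V) (v : V) : Prop where
  mem : v ∈ s
  eq_of_adj : ∀ ⦃a b⦄, G.Adj a b → a ∈ s → b ∉ s → a = v

namespace IsBranchAt

lemma insert_compl (h : G.IsBranchAt s v) : G.IsBranchAt (insert v sᶜ) v where
  mem := Set.mem_insert v _
  eq_of_adj a b hab ha hb := by
    simp only [Set.mem_insert_iff, Set.mem_compl_iff, not_or, not_not] at ha hb
    exact ha.resolve_right fun has => hb.1 (h.eq_of_adj hab.symm hb.2 has)

lemma reachable (h : G.IsBranchAt s v) {x : V} (p : G.Walk x v) (hx : x ∈ s) :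
    ((⊤ : G.Subgraph).induce s).coe.Reachable ⟨x, hx⟩ ⟨v, h.mem⟩ := by
  induction p with
  | nil => rfl
  | @cons x y _ hxy q ih =>
    by_cases hy : y ∈ s
    · exact (Adj.reachable (show ((⊤ : G.Subgraph).induce s).coe.Adj ⟨x, hx⟩ ⟨y, hy⟩ from
        ⟨hx, hy, hxy⟩)).trans (ih h hy)
    · obtain rfl := h.eq_of_adj hxy hx hy
      rfl

lemma connected_induce (hG : G.Connected) (h : G.IsBranchAt s v) :
    ((⊤ : G.Subgraph).induce s).Connected := by
  refine Subgraph.connected_iff.2 ⟨?_, v, h.mem⟩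
  rw [Subgraph.preconnected_iff]
  rintro ⟨x, hx⟩ ⟨y, hy⟩
  exact (h.reachable (hG.preconnected x v).some hx).trans
    (h.reachable (hG.preconnected y v).some hy).symm

lemma divides (hG : G.Connected) (h : G.IsBranchAt s v) :
    Divides ((⊤ : G.Subgraph).induce (insert v sᶜ)) ((⊤ : G.Subgraph).induce s) := by
  refine ⟨h.insert_compl.connected_induce hG, h.connected_induce hG, ?_, v, ?_⟩
  · ext a b
    · simp only [Subgraph.verts_sup, Subgraph.induce_verts, Subgraph.verts_top, Set.mem_union,
        Set.mem_insert_iff, Set.mem_compl_iff, Set.mem_univ, iff_true]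
      tauto
    · simp only [Subgraph.sup_adj, Subgraph.induce_adj, Subgraph.top_adj, Set.mem_insert_iff,
        Set.mem_compl_iff]
      refine ⟨by tauto, fun hab => ?_⟩
      by_cases ha : a ∈ s <;> by_cases hb : b ∈ s
      · exact Or.inr ⟨ha, hb, hab⟩
      · exact Or.inl ⟨Or.inl (h.eq_of_adj hab ha hb), Or.inr hb, hab⟩
      · exact Or.inl ⟨Or.inr ha, Or.inl (h.eq_of_adj hab.symm hb ha), hab⟩
      · exact Or.inl ⟨Or.inr ha, Or.inr hb, hab⟩
  · ext x
    simp only [Subgraph.induce_verts, Set.mem_inter_iff, Set.mem_insert_iff, Set.mem_compl_iff,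
      Set.mem_singleton_iff]
    constructor
    · rintro ⟨hx | hx, hxs⟩
      exacts [hx, absurd hxs hx]
    · rintro rfl
      exact ⟨Or.inl rfl, h.mem⟩

end IsBranchAt

/-- The vertex set of the connected component of `w` in `G[s]`. -/
def componentWithin (G : SimpleGraph V) (s : Set V) (w : V) : Set V :=
  {x | ∃ p : G.Walk x w, ∀ z ∈ p.support, z ∈ s}

lemma componentWithin_subset : G.componentWithin s w ⊆ s :=
  fun x ⟨p, hp⟩ => hp x p.start_mem_support

lemma mem_componentWithin_self (hw : w ∈ s) : w ∈ G.componentWithin s w :=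
  ⟨.nil, by simpa using hw⟩

lemma mem_componentWithin_of_adj {x y : V} (hx : x ∈ G.componentWithin s w) (hxy : G.Adj x y)
    (hy : y ∈ s) : y ∈ G.componentWithin s w := by
  obtain ⟨p, hp⟩ := hx
  refine ⟨.cons hxy.symm p, fun z hz => ?_⟩
  rw [Walk.support_cons, List.mem_cons] at hz
  rcases hz with rfl | hz
  exacts [hy, hp z hz]

/-- The edge `s(v, a)` is a bridge, yet `v, a'` followed by a walk inside `s` reaches `a`
without using it unless `a = a'`. -/
lemma IsAcyclic.eq_of_adj_of_mem_componentWithin (hG : G.IsAcyclic) (hv : v ∉ s) {a a' : V}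
    (ha : a ∈ G.componentWithin s w) (ha' : a' ∈ G.componentWithin s w) (hva : G.Adj v a)
    (hva' : G.Adj v a') : a = a' := by
  obtain ⟨p, hp⟩ := ha
  obtain ⟨p', hp'⟩ := ha'
  have hq : ∀ z ∈ (p'.append p.reverse).support, z ∈ s := by
    simp only [Walk.mem_support_append_iff, Walk.support_reverse, List.mem_reverse]
    rintro z (hz | hz)
    exacts [hp' z hz, hp z hz]
  have hbridge := isBridge_iff_forall_walk_mem_edges.1 (isAcyclic_iff_forall_adj_isBridge.1 hG hva)
    (.cons hva' (p'.append p.reverse))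
  rw [Walk.edges_cons, List.mem_cons, Sym2.eq_iff] at hbridge
  rcases hbridge with (⟨-, rfl⟩ | ⟨rfl, -⟩) | he
  · rfl
  · exact absurd (componentWithin_subset ⟨p', hp'⟩) hv
  · exact absurd (hq v ((p'.append p.reverse).fst_mem_support_of_mem_edges he)) hv

namespace IsBranchAt

lemma eq_of_adj_componentWithin (h : G.IsBranchAt s v) {a b : V}
    (ha : a ∈ G.componentWithin (s \ {v}) w) (hab : G.Adj a b)
    (hb : b ∉ G.componentWithin (s \ {v}) w) : b = v := by
  have has : a ∈ s \ {v} := componentWithin_subset ha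
  by_contra hbv
  have hbs : b ∉ s := fun hbs => hb (mem_componentWithin_of_adj ha hab ⟨hbs, hbv⟩)
  exact has.2 (h.eq_of_adj hab has.1 hbs)

lemma exists_isBranchAt_componentWithin (hG : G.IsAcyclic) (h : G.IsBranchAt s v)
    (hw : w ∈ s \ {v}) : ∃ u, G.IsBranchAt (G.componentWithin (s \ {v}) w) u := by
  have hvC : v ∉ s \ {v} := fun hv => hv.2 rfl
  by_cases hattach : ∃ u ∈ G.componentWithin (s \ {v}) w, G.Adj v u
  · obtain ⟨u, huC, hvu⟩ := hattach
    refine ⟨u, huC, fun a b hab ha hb => ?_⟩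
    obtain rfl := h.eq_of_adj_componentWithin ha hab hb
    exact hG.eq_of_adj_of_mem_componentWithin hvC ha huC hab.symm hvu
  · refine ⟨w, mem_componentWithin_self hw, fun a b hab ha hb => ?_⟩
    obtain rfl := h.eq_of_adj_componentWithin ha hab hb
    exact absurd ⟨a, ha, hab.symm⟩ hattach

lemma diff_componentWithin (h : G.IsBranchAt s v) :
    G.IsBranchAt (s \ G.componentWithin (s \ {v}) w) v := by
  refine ⟨⟨h.mem, fun hv => (componentWithin_subset hv).2 rfl⟩, fun a b hab ha hb => ?_⟩
  by_contra hav
  rw [Set.mem_sdiff, not_and, not_not] at hb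
  by_cases hbs : b ∈ s
  · exact ha.2 (mem_componentWithin_of_adj (hb hbs) hab.symm ⟨ha.1, hav⟩)
  · exact hav (h.eq_of_adj hab ha.1 hbs)

end IsBranchAt

lemma IsTree.exists_isBranchAt_le_ncard_lt [Finite V] (hG : G.IsTree) {m : ℕ} (hm : 1 ≤ m)
    (hmV : m ≤ Nat.card V) (t : V) :
    ∃ s v, G.IsBranchAt s v ∧ t ∉ s \ {v} ∧ m ≤ s.ncard ∧ s.ncard < 2 * m := by
  set S := {p : Set V × V | G.IsBranchAt p.1 p.2 ∧ t ∉ p.1 \ {p.2} ∧ m ≤ p.1.ncard}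
  have hS : (Set.univ, t) ∈ S :=
    ⟨⟨trivial, fun _ _ _ _ hb => absurd trivial hb⟩, fun ht => ht.2 rfl, by simpa using hmV⟩
  obtain ⟨⟨s, v⟩, ⟨h, ht, hms⟩, hmin⟩ := S.exists_min_image (·.1.ncard) S.toFinite ⟨_, hS⟩
  dsimp only at h ht hms hmin
  refine ⟨s, v, h, ht, hms, not_le.1 fun h2m => ?_⟩
  obtain ⟨w, hw⟩ : (s \ {v}).Nonempty := by
    apply Set.nonempty_of_ncard_ne_zero
    rw [Set.ncard_sdiff_singleton_of_mem h.mem]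
    omega
  set C := G.componentWithin (s \ {v}) w
  have hCs : C ⊆ s \ {v} := componentWithin_subset
  have hCm : C.ncard < m := by
    obtain ⟨u, hu⟩ := h.exists_isBranchAt_componentWithin hG.isAcyclic hw
    by_contra! hmC
    have hsC : s.ncard ≤ C.ncard := hmin (C, u) ⟨hu, fun htC => ht (hCs htC.1), hmC⟩
    exact (Set.ncard_lt_ncard (hCs.trans_ssubset (Set.sdiff_singleton_ssubset.2 h.mem))).not_ge hsC
  have hCpos : 0 < C.ncard := (Set.ncard_pos C.toFinite).2 ⟨w, mem_componentWithin_self hw⟩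
  have hcard_diff := Set.ncard_sdiff (hCs.trans Set.sdiff_subset)
  have hs_le : s.ncard ≤ (s \ C).ncard := hmin (s \ C, v)
    ⟨h.diff_componentWithin, fun htC => ht ⟨htC.1.1, htC.2⟩, show m ≤ (s \ C).ncard by omega⟩
  omega

end SimpleGraph

open SimpleGraph in
/-- Let `n, m` be positive integers with `1 ≤ m ≤ n/3`.  For every tree `T` with `n`
vertices and every vertex `t` of `T`, there exist two subtrees `T₁` and `T₂` which
divide `T` such that `t ∈ V(T₁)` and `m ≤ |T₂| ≤ 3m`. -/
theorem statement_7 (n m : ℕ) (hm : 1 ≤ m) (hmn : 3 * m ≤ n)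
    (T : SimpleGraph (Fin n)) (hT : T.IsTree) (t : Fin n) :
    ∃ A B : T.Subgraph, Divides A B ∧ t ∈ A.verts ∧
      m ≤ B.verts.ncard ∧ B.verts.ncard ≤ 3 * m := by
  obtain ⟨s, v, h, ht, hms, hs⟩ :=
    hT.exists_isBranchAt_le_ncard_lt hm (by rw [Nat.card_fin]; omega) t
  refine ⟨_, _, h.divides hT.connected, ?_, hms, by simp only [Subgraph.induce_verts]; omega⟩
  by_cases hts : t ∈ s
  · exact Or.inl (by_contra fun htv => ht ⟨hts, htv⟩)
  · exact Or.inr hts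
end

section
/- Let n, m, Δ be positive integers, let f : [n] → [Δ], and let D = Σ_{i∈[n]} f(i). Let H be a bipartite graph with vertex classes A = [n] and B = [D] such that: (i) every U ⊆ A with |U| ≤ m satisfies |N(U)| ≥ Δ·|U|; (ii) every U ⊆ B with |U| ≤ m satisfies |N(U)| ≥ |U|; and (iii) for all U ⊆ A and V ⊆ B with |U| ≥ m and |V| ≥ m there is at least one edge of H between U and V. Then there is an f-matching from A into B. -/
/-!
Replacing every `a ∈ A` by `f a` copies turns an `f`-matching into an ordinary matching, so
by Hall's theorem it suffices that `∑_{a ∈ U} f a ≤ |N(U)|` for every `U ⊆ A`. For `|U| ≤ m`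
this follows from (i) since `f ≤ Δ`. For `|U| ≥ m`, the set `W = B \ N(U)` sends no edge to
`U`, so `|W| < m` by (iii); then (ii) gives `|W| ≤ |N(W)| ≤ |A \ U| ≤ ∑_{a ∉ U} f a`, and
`|N(U)| = D - |W|` finishes.
-/
open Finset Function

variable {α β : Type*}

theorem Finset.card_le_sum_image_fst_card [DecidableEq α] {f : α → ℕ}
    (s : Finset (Σ a, Fin (f a))) : s.card ≤ ∑ a ∈ s.image Sigma.fst, f a :=
  calc s.card ≤ ((s.image Sigma.fst).sigma fun a => (univ : Finset (Fin (f a)))).card :=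
        card_le_card fun x hx => mem_sigma.2 ⟨mem_image_of_mem _ hx, mem_univ _⟩
    _ = ∑ a ∈ s.image Sigma.fst, f a := by simp [card_sigma]

theorem exists_fMatching_of_forall_sum_le_ncard [Finite β] (H : α → β → Prop) (f : α → ℕ)
    (hall : ∀ U : Finset α, ∑ a ∈ U, f a ≤ {b | ∃ a ∈ U, H a b}.ncard) :
    ∃ X : α → Set β, (∀ a, X a ⊆ {b | H a b}) ∧ (∀ a, (X a).ncard = f a) ∧
      Pairwise (Disjoint on X) := by
  classical
  let t : (Σ a, Fin (f a)) → Finset β := fun x => (Set.toFinite {b | H x.1 b}).toFinset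
  have hall_copies : ∀ s : Finset (Σ a, Fin (f a)), s.card ≤ (s.biUnion t).card := fun s => calc
    s.card ≤ ∑ a ∈ s.image Sigma.fst, f a := s.card_le_sum_image_fst_card
    _ ≤ {b | ∃ a ∈ s.image Sigma.fst, H a b}.ncard := hall _
    _ = (s.biUnion t).card := by
      rw [← Set.ncard_coe_finset]; congr 1; ext b; simp [t]
  obtain ⟨g, hg_inj, hg_mem⟩ := (all_card_le_biUnion_card_iff_exists_injective t).1 hall_copies
  have hg_inj_snd (a : α) : Injective fun j : Fin (f a) => g ⟨a, j⟩ :=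
    hg_inj.comp sigma_mk_injective
  refine ⟨fun a => Set.range fun j => g ⟨a, j⟩, ?_, fun a => ?_, fun a a' hne => ?_⟩
  · rintro a _ ⟨j, rfl⟩
    simpa [t] using hg_mem ⟨a, j⟩
  · simp only [Set.ncard_range_of_injective (hg_inj_snd a), Nat.card_eq_fintype_card,
      Fintype.card_fin]
  · rw [onFun, Set.disjoint_left]
    rintro _ ⟨j, rfl⟩ ⟨j', hj'⟩
    exact hne (congrArg Sigma.fst (hg_inj hj')).symm

section Expansion

variable (H : α → β → Prop) {m : ℕ}

theorem ncard_compl_neighbors_le [Finite α]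
    (h2 : ∀ W : Set β, W.ncard ≤ m → W.ncard ≤ {a | ∃ b ∈ W, H a b}.ncard)
    (h3 : ∀ (U : Set α) (W : Set β), m ≤ U.ncard → m ≤ W.ncard → ∃ a ∈ U, ∃ b ∈ W, H a b)
    {U : Set α} (hU : m ≤ U.ncard) :
    {b | ∃ a ∈ U, H a b}ᶜ.ncard ≤ Uᶜ.ncard := by
  set W := {b | ∃ a ∈ U, H a b}ᶜ
  have hW : W.ncard ≤ m := by
    by_contra! hW
    obtain ⟨a, ha, b, hb, hab⟩ := h3 U W hU hW.le
    exact hb ⟨a, ha, hab⟩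
  calc W.ncard ≤ {a | ∃ b ∈ W, H a b}.ncard := h2 W hW
    _ ≤ Uᶜ.ncard := Set.ncard_le_ncard fun a ⟨_, hb, hab⟩ ha => hb ⟨a, ha, hab⟩

theorem sum_le_ncard_neighbors_of_card_le {Δ : ℕ} {f : α → ℕ} (hfΔ : ∀ a, f a ≤ Δ)
    (h1 : ∀ U : Set α, U.ncard ≤ m → Δ * U.ncard ≤ {b | ∃ a ∈ U, H a b}.ncard)
    {U : Finset α} (hU : U.card ≤ m) :
    ∑ a ∈ U, f a ≤ {b | ∃ a ∈ U, H a b}.ncard := by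
  have h1U := h1 U (by rwa [Set.ncard_coe_finset])
  rw [Set.ncard_coe_finset] at h1U
  calc ∑ a ∈ U, f a ≤ U.card • Δ := sum_le_card_nsmul U f Δ fun a _ => hfΔ a
    _ = Δ * U.card := mul_comm _ _
    _ ≤ _ := h1U

theorem sum_le_ncard_neighbors_of_le_card [Fintype α] [Finite β] {f : α → ℕ}
    (hf : ∀ a, 1 ≤ f a) (hβ : Nat.card β = ∑ a, f a)
    (h2 : ∀ W : Set β, W.ncard ≤ m → W.ncard ≤ {a | ∃ b ∈ W, H a b}.ncard)
    (h3 : ∀ (U : Set α) (W : Set β), m ≤ U.ncard → m ≤ W.ncard → ∃ a ∈ U, ∃ b ∈ W, H a b)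
    {U : Finset α} (hU : m ≤ U.card) :
    ∑ a ∈ U, f a ≤ {b | ∃ a ∈ U, H a b}.ncard := by
  classical
  have hcompl := ncard_compl_neighbors_le H h2 h3 (U := U) (by rwa [Set.ncard_coe_finset])
  simp only [mem_coe, ← coe_compl, Set.ncard_coe_finset] at hcompl
  have hUc : Uᶜ.card ≤ ∑ a ∈ Uᶜ, f a := by
    simpa using card_nsmul_le_sum Uᶜ f 1 fun a _ => hf a
  have := Set.ncard_add_ncard_compl {b | ∃ a ∈ U, H a b}
  rw [hβ, ← sum_add_sum_compl U] at this
  omega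

end Expansion

theorem statement_8_general (n m Δ : ℕ)
    (f : Fin n → ℕ) (hf : ∀ i, 1 ≤ f i ∧ f i ≤ Δ)
    (D : ℕ) (hD : D = ∑ i, f i)
    (H : Fin n → Fin D → Prop)
    (h1 : ∀ U : Set (Fin n), U.ncard ≤ m →
      Δ * U.ncard ≤ ({b : Fin D | ∃ a ∈ U, H a b}).ncard)
    (h2 : ∀ U : Set (Fin D), U.ncard ≤ m →
      U.ncard ≤ ({a : Fin n | ∃ b ∈ U, H a b}).ncard)
    (h3 : ∀ (U : Set (Fin n)) (W : Set (Fin D)), m ≤ U.ncard → m ≤ W.ncard →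
      ∃ a ∈ U, ∃ b ∈ W, H a b) :
    ∃ X : Fin n → Set (Fin D),
      (∀ a, X a ⊆ {b : Fin D | H a b}) ∧
      (∀ a, (X a).ncard = f a) ∧
      (∀ a a', a ≠ a' → Disjoint (X a) (X a')) := by
  have hall (U : Finset (Fin n)) : ∑ a ∈ U, f a ≤ {b | ∃ a ∈ U, H a b}.ncard := by
    rcases le_total U.card m with hU | hU
    · exact sum_le_ncard_neighbors_of_card_le H (fun a => (hf a).2) h1 hU
    · exact sum_le_ncard_neighbors_of_le_card H (fun a => (hf a).1) (by simp [hD]) h2 h3 hU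
  exact exists_fMatching_of_forall_sum_le_ncard H f hall

/-- Let `n, m, Δ` be positive integers, `f : [n] → [Δ]`, and `D = Σ_{i∈[n]} f(i)`.
Let `H` be a bipartite graph with vertex classes `A = [n]` and `B = [D]` such that:
(i) every `U ⊆ A` with `|U| ≤ m` satisfies `|N(U)| ≥ Δ·|U|`;
(ii) every `U ⊆ B` with `|U| ≤ m` satisfies `|N(U)| ≥ |U|`;
(iii) any `U ⊆ A`, `W ⊆ B` with `|U|, |W| ≥ m` have an edge of `H` between them.
Then there is an `f`-matching from `A` into `B`: a family of pairwise disjoint sets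
`X a ⊆ N(a)` with `|X a| = f a`. -/
theorem statement_8 (n m Δ : ℕ) (hn : 0 < n) (hm : 0 < m) (hΔ : 0 < Δ)
    (f : Fin n → ℕ) (hf : ∀ i, 1 ≤ f i ∧ f i ≤ Δ)
    (D : ℕ) (hD : D = ∑ i, f i)
    (H : Fin n → Fin D → Prop)
    (h1 : ∀ U : Set (Fin n), U.ncard ≤ m →
      Δ * U.ncard ≤ ({b : Fin D | ∃ a ∈ U, H a b}).ncard)
    (h2 : ∀ U : Set (Fin D), U.ncard ≤ m →
      U.ncard ≤ ({a : Fin n | ∃ b ∈ U, H a b}).ncard)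
    (h3 : ∀ (U : Set (Fin n)) (W : Set (Fin D)), m ≤ U.ncard → m ≤ W.ncard →
      ∃ a ∈ U, ∃ b ∈ W, H a b) :
    ∃ X : Fin n → Set (Fin D),
      (∀ a, X a ⊆ {b : Fin D | H a b}) ∧
      (∀ a, (X a).ncard = f a) ∧
      (∀ a a', a ≠ a' → Disjoint (X a) (X a')) :=
  statement_8_general n m Δ f hf D hD H h1 h2 h3
end

section
/- Let m, d be positive integers, let G be an m-joined graph, and let W ⊆ V(G) satisfy |W| ≥ (3d+4)m. Then there is a set B ⊆ V(G) with |B| ≤ m such that every set U ⊆ V(G)\B with |U| ≤ 2m satisfies |N(U, W\B)| ≥ d·|U|. -/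
/-!
Build `B` greedily: while some `U` disjoint from `B` with `|U| ≤ 2m` has fewer than `d|U|`
neighbours in `W \ B`, replace `B` by `B ∪ U`. This keeps `|N(B, W)| ≤ d|B|`. Since `G` is
`m`-joined, fewer than `m` vertices of `W` lie outside `B ∪ N(B)` as soon as `|B| ≥ m`; so a set
`B` with `m ≤ |B| < 3m` would give `|W| < (d + 1)|B| + m ≤ (3d + 4)m`. Hence `|B|` stays below
`m` and strictly grows, and the process stops.
-/

/-- A graph `G` is `m`-joined if there is an edge of `G` between any two disjoint
vertex sets each containing at least `m` vertices. -/
def MJoined {V : Type*} (G : SimpleGraph V) (m : ℕ) : Prop :=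
  ∀ A B : Set V, Disjoint A B → m ≤ A.ncard → m ≤ B.ncard →
    ∃ a ∈ A, ∃ b ∈ B, G.Adj a b

/-- The exterior neighbourhood `N(U)` of a vertex set `U`: all vertices outside `U`
having a neighbour in `U`. -/
def extNbhd {V : Type*} (G : SimpleGraph V) (U : Set V) : Set V :=
  {v | v ∉ U ∧ ∃ u ∈ U, G.Adj u v}

section

variable {V : Type*} {G : SimpleGraph V} {m d : ℕ}

lemma extNbhd_union_inter_subset (B U W : Set V) :
    extNbhd G (B ∪ U) ∩ W ⊆ (extNbhd G B ∩ W) ∪ (extNbhd G U ∩ (W \ B)) := by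
  rintro v ⟨⟨hvBU, u, hu | hu, huv⟩, hvW⟩
  · exact Or.inl ⟨⟨fun h => hvBU (Or.inl h), u, hu, huv⟩, hvW⟩
  · exact Or.inr ⟨⟨fun h => hvBU (Or.inr h), u, hu, huv⟩, hvW, fun h => hvBU (Or.inl h)⟩

lemma MJoined.ncard_diff_lt (hG : MJoined G m) (W : Set V) {X : Set V} (hX : m ≤ X.ncard) :
    (W \ (X ∪ extNbhd G X)).ncard < m := by
  by_contra! h
  have hdisj : Disjoint X (W \ (X ∪ extNbhd G X)) :=
    Set.disjoint_left.2 fun _ ha hb => hb.2 (Or.inl ha)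
  obtain ⟨a, ha, b, hb, hab⟩ := hG X _ hdisj hX h
  exact hb.2 (Or.inr ⟨fun hbX => hb.2 (Or.inl hbX), a, ha, hab⟩)

variable [Finite V]

lemma MJoined.ncard_lt (hG : MJoined G m) (W : Set V) {X : Set V} (hX : m ≤ X.ncard) :
    W.ncard < X.ncard + (extNbhd G X ∩ W).ncard + m := by
  have hcovered : W ∩ (X ∪ extNbhd G X) ⊆ X ∪ (extNbhd G X ∩ W) := by
    rintro v ⟨hvW, hvX | hvN⟩
    exacts [Or.inl hvX, Or.inr ⟨hvN, hvW⟩]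
  calc W.ncard = (W ∩ (X ∪ extNbhd G X)).ncard + (W \ (X ∪ extNbhd G X)).ncard :=
        (Set.ncard_inter_add_ncard_sdiff_eq_ncard _ _).symm
    _ < (X ∪ (extNbhd G X ∩ W)).ncard + m :=
        Nat.add_lt_add_of_le_of_lt (Set.ncard_le_ncard hcovered) (hG.ncard_diff_lt W hX)
    _ ≤ X.ncard + (extNbhd G X ∩ W).ncard + m := by
        gcongr
        exact Set.ncard_union_le _ _

lemma MJoined.ncard_lt_of_ncard_extNbhd_inter_le (hG : MJoined G m) {W X : Set V}
    (hW : (3 * d + 4) * m ≤ W.ncard) (hX : X.ncard ≤ 3 * m)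
    (hXW : (extNbhd G X ∩ W).ncard ≤ d * X.ncard) : X.ncard < m := by
  by_contra! hmX
  have := hG.ncard_lt W hmX
  nlinarith

lemma ncard_extNbhd_union_inter_le {W B U : Set V}
    (hB : (extNbhd G B ∩ W).ncard ≤ d * B.ncard) (hUB : Disjoint U B)
    (hU : (extNbhd G U ∩ (W \ B)).ncard < d * U.ncard) :
    (extNbhd G (B ∪ U) ∩ W).ncard ≤ d * (B ∪ U).ncard :=
  calc (extNbhd G (B ∪ U) ∩ W).ncard
      ≤ ((extNbhd G B ∩ W) ∪ (extNbhd G U ∩ (W \ B))).ncard :=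
        Set.ncard_le_ncard (extNbhd_union_inter_subset B U W)
    _ ≤ (extNbhd G B ∩ W).ncard + (extNbhd G U ∩ (W \ B)).ncard := Set.ncard_union_le _ _
    _ ≤ d * (B ∪ U).ncard := by
        rw [Set.ncard_union_eq hUB.symm, Nat.mul_add]
        omega

lemma MJoined.exists_expanding_of_ncard_le (hG : MJoined G m) {W : Set V}
    (hW : (3 * d + 4) * m ≤ W.ncard) (B : Set V) (hBm : B.ncard ≤ m)
    (hB : (extNbhd G B ∩ W).ncard ≤ d * B.ncard) :
    ∃ B' : Set V, B'.ncard ≤ m ∧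
      ∀ U : Set V, Disjoint U B' → U.ncard ≤ 2 * m →
        d * U.ncard ≤ (extNbhd G U ∩ (W \ B')).ncard := by
  by_cases hbad : ∃ U : Set V, Disjoint U B ∧ U.ncard ≤ 2 * m ∧
      (extNbhd G U ∩ (W \ B)).ncard < d * U.ncard
  · obtain ⟨U, hUB, hU2m, hU⟩ := hbad
    have hUpos : 0 < U.ncard := Nat.pos_of_ne_zero fun h => by simp [h] at hU
    have hcard : (B ∪ U).ncard = B.ncard + U.ncard := Set.ncard_union_eq hUB.symm
    have hBU : (extNbhd G (B ∪ U) ∩ W).ncard ≤ d * (B ∪ U).ncard :=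
      ncard_extNbhd_union_inter_le hB hUB hU
    have hBUm : (B ∪ U).ncard < m :=
      hG.ncard_lt_of_ncard_extNbhd_inter_le hW (by omega) hBU
    exact hG.exists_expanding_of_ncard_le hW (B ∪ U) hBUm.le hBU
  · push Not at hbad
    exact ⟨B, hBm, hbad⟩
termination_by m - B.ncard
decreasing_by omega

end

theorem statement_9_general {V : Type*} [Fintype V] (m d : ℕ)
    (G : SimpleGraph V) (hG : MJoined G m)
    (W : Set V) (hW : (3 * d + 4) * m ≤ W.ncard) :
    ∃ B : Set V, B.ncard ≤ m ∧
      ∀ U : Set V, Disjoint U B → U.ncard ≤ 2 * m →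
        d * U.ncard ≤ (extNbhd G U ∩ (W \ B)).ncard :=
  hG.exists_expanding_of_ncard_le hW ∅ (by simp) (by simp [extNbhd])

/-- Let `m, d` be positive integers, `G` an `m`-joined graph, and `W ⊆ V(G)` with
`|W| ≥ (3d+4)m`.  Then there is a set `B ⊆ V(G)` with `|B| ≤ m` such that every set
`U ⊆ V(G)\B` with `|U| ≤ 2m` satisfies `|N(U, W\B)| ≥ d·|U|`. -/
theorem statement_9 {V : Type*} [Fintype V] (m d : ℕ) (hm : 0 < m) (hd : 0 < d)
    (G : SimpleGraph V) (hG : MJoined G m)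
    (W : Set V) (hW : (3 * d + 4) * m ≤ W.ncard) :
    ∃ B : Set V, B.ncard ≤ m ∧
      ∀ U : Set V, Disjoint U B → U.ncard ≤ 2 * m →
        d * U.ncard ≤ (extNbhd G U ∩ (W \ B)).ncard :=
  statement_9_general m d G hG W hW
end

section
/- Suppose np ≥ 10^15. Then with probability 1 − o(n^{−2}) (uniformly over all p with 10^15/n ≤ p ≤ 1) the random graph G = G(n,p) has the following property: for every set U ⊆ V(G) with |U| ≥ n/10^6 and every subgraph H of G with U ⊆ V(H) and at most p·n²/10^16 edges such that U has many boosters in H, at least one of these boosters is an edge of G. -/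
/-!
A union bound over the pair `(U, E(H))`. For a witness `(U, H)`, the edge set `S` of `H`
lies in `G` while none of the at least `(n/10⁶)²/32` pairs `T` coming from boosters of `H[U]`
does; for fixed `(U, S)` this has probability `p^|S| (1-p)^|T|`. With `m = ⌊pn²/10¹⁶⌋ ≥ |S|`
and `N = n(n-1)/2`, summing over the `2ⁿ` sets `U` and over `S` gives at most
`2ⁿ · ∑_{k ≤ m} C(N,k) p^k · (1-p)^{n²/(32·10¹²)} ≤ eⁿ (e·Np/m)^m e^{-312 r}`,
where `r = pn²/10¹⁶`. Since `Np/m ≤ 10¹⁶`, `m ≤ r` and `n ≤ 10 r`, this is at most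
`e^{-n} = o(n⁻²)`.
-/

open MeasureTheory

/-- The Bernoulli measure on `Bool` with parameter `p`. -/
noncomputable def bern (p : ℝ) : Measure Bool :=
  (ENNReal.ofReal p) • Measure.dirac true + (ENNReal.ofReal (1 - p)) • Measure.dirac false

instance bern.instIsFiniteMeasure (p : ℝ) : IsFiniteMeasure (bern p) := by
  constructor
  simp only [bern, Measure.coe_add, Pi.add_apply, Measure.coe_smul, Pi.smul_apply,
    smul_eq_mul, measure_univ, mul_one]
  exact ENNReal.add_lt_top.2 ⟨ENNReal.ofReal_lt_top, ENNReal.ofReal_lt_top⟩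

/-- The distribution of the binomial random graph `G(n,p)`. -/
noncomputable def gnp (n : ℕ) (p : ℝ) :
    Measure ({e : Sym2 (Fin n) // ¬ e.IsDiag} → Bool) :=
  Measure.pi fun _ => bern p

/-- The graph on `Fin n` determined by a sample point. -/
def graphOf {n : ℕ} (ω : {e : Sym2 (Fin n) // ¬ e.IsDiag} → Bool) : SimpleGraph (Fin n) :=
  SimpleGraph.fromEdgeSet {e | ∃ h : ¬ e.IsDiag, ω ⟨e, h⟩ = true}

/-- A graph is Hamiltonian if it contains a cycle through all of its vertices. -/
def HamiltonianGraph {V : Type*} (G : SimpleGraph V) : Prop :=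
  ∃ (v : V) (c : G.Walk v v), c.IsCycle ∧ ∀ u, u ∈ c.support

/-- The boosters of a graph `K`: non-edges `e` such that `K + e` is Hamiltonian. -/
def boosters {V : Type*} (K : SimpleGraph V) : Set (Sym2 V) :=
  {e | ¬ e.IsDiag ∧ e ∉ K.edgeSet ∧ HamiltonianGraph (K ⊔ SimpleGraph.fromEdgeSet {e})}

/-- A vertex set `U` has *many boosters* in `H` if the induced subgraph `H[U]` has at
least `|U|²/32` boosters. -/
def ManyBoosters {V : Type*} (H : SimpleGraph V) (U : Set V) : Prop :=
  (U.ncard : ℝ) ^ 2 / 32 ≤ (boosters (H.induce U)).ncard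

open Finset

section Bernoulli

variable {p : ℝ}

lemma bern_singleton_true : bern p {true} = ENNReal.ofReal p := by
  simp [bern]

lemma bern_singleton_false : bern p {false} = ENNReal.ofReal (1 - p) := by
  simp [bern]

lemma bern_univ (hp0 : 0 ≤ p) (hp1 : p ≤ 1) : bern p Set.univ = 1 := by
  simp [bern, ← ENNReal.ofReal_add hp0 (sub_nonneg.2 hp1)]

variable {ι : Type*} [Fintype ι]

def boolCylinder (S T : Finset ι) : Set (ι → Bool) :=
  {ω | (∀ i ∈ S, ω i = true) ∧ ∀ i ∈ T, ω i = false}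

lemma pi_bern_boolCylinder (hp0 : 0 ≤ p) (hp1 : p ≤ 1) {S T : Finset ι}
    (hST : Disjoint S T) :
    Measure.pi (fun _ : ι => bern p) (boolCylinder S T) =
      ENNReal.ofReal p ^ #S * ENNReal.ofReal (1 - p) ^ #T := by
  classical
  let C : ι → Set Bool := fun i =>
    if i ∈ S then {true} else if i ∈ T then {false} else Set.univ
  have hC : boolCylinder S T = Set.univ.pi C := by
    ext ω
    simp only [boolCylinder, Set.mem_univ_pi, C]
    refine ⟨fun ⟨hS, hT⟩ i => ?_,
      fun h => ⟨fun i hi => by simpa [hi] using h i, fun i hi => ?_⟩⟩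
    · split_ifs with hiS hiT
      exacts [hS i hiS, hT i hiT, trivial]
    · simpa [hi, disjoint_right.1 hST hi] using h i
  have hT : ({i | i ∉ S ∧ i ∈ T} : Finset ι) = T := by
    ext i
    simpa using fun hi => disjoint_right.1 hST hi
  rw [hC, Measure.pi_pi]
  simp only [C, apply_ite (bern p), bern_singleton_true, bern_singleton_false, bern_univ hp0 hp1,
    prod_ite, prod_const, filter_filter, hT, filter_mem_eq_inter, univ_inter, one_pow, mul_one]

lemma pi_bern_le_of_subset_biUnion_boolCylinder (hp0 : 0 ≤ p) (hp1 : p ≤ 1) {α : Type*}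
    (A : Finset α) (S T : α → Finset ι) {b : ℕ} (hST : ∀ a ∈ A, Disjoint (S a) (T a))
    (hb : ∀ a ∈ A, b ≤ #(T a)) {E : Set (ι → Bool)}
    (hE : E ⊆ ⋃ a ∈ A, boolCylinder (S a) (T a)) :
    Measure.pi (fun _ : ι => bern p) E ≤
      ENNReal.ofReal (∑ a ∈ A, p ^ #(S a) * (1 - p) ^ b) := by
  have hq0 : 0 ≤ 1 - p := sub_nonneg.2 hp1
  rw [ENNReal.ofReal_sum_of_nonneg fun a _ => by positivity]
  refine (measure_mono hE).trans <| (measure_biUnion_finset_le A _).trans <|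
    sum_le_sum fun a ha => ?_
  rw [pi_bern_boolCylinder hp0 hp1 (hST a ha), ← ENNReal.ofReal_pow hp0,
    ← ENNReal.ofReal_pow hq0, ← ENNReal.ofReal_mul (by positivity)]
  exact ENNReal.ofReal_le_ofReal <| mul_le_mul_of_nonneg_left
    (pow_le_pow_of_le_one hq0 (by linarith) (hb a ha)) (by positivity)

end Bernoulli

lemma sum_pow_card_filter_card_le {ι : Type*} [Fintype ι] {p : ℝ} (hp : 0 ≤ p) (m : ℕ) :
    ∑ S ∈ (univ : Finset (Finset ι)).filter (#· ≤ m), p ^ #S ≤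
      ∑ k ∈ range (m + 1), ((Fintype.card ι).choose k : ℝ) * p ^ k := by
  classical
  have h := sum_powerset_apply_card (fun k => if k ≤ m then p ^ k else 0)
    (x := (univ : Finset ι))
  rw [powerset_univ, ← sum_filter, card_univ] at h
  simp_rw [h, nsmul_eq_mul, mul_ite, mul_zero]
  rw [← sum_filter]
  refine sum_le_sum_of_subset_of_nonneg (fun k hk => ?_) fun k _ _ => by positivity
  simp only [mem_filter, mem_range] at hk ⊢
  omega

lemma sum_choose_mul_pow_le {N m : ℕ} {p : ℝ} (hp : 0 ≤ p) (hm : 0 < m)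
    (hmN : (m : ℝ) ≤ N * p) :
    ∑ k ∈ range (m + 1), (N.choose k : ℝ) * p ^ k ≤ (N * p / m) ^ m * Real.exp m := by
  have hm' : (0 : ℝ) < m := by exact_mod_cast hm
  have hratio : 1 ≤ N * p / m := (one_le_div hm').2 hmN
  calc ∑ k ∈ range (m + 1), (N.choose k : ℝ) * p ^ k
      ≤ ∑ k ∈ range (m + 1), (N * p / m) ^ m * ((m : ℝ) ^ k / k.factorial) := by
        refine sum_le_sum fun k hk => ?_
        have hk : k ≤ m := Nat.lt_succ_iff.1 (mem_range.1 hk)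
        calc (N.choose k : ℝ) * p ^ k ≤ (N : ℝ) ^ k / k.factorial * p ^ k := by
              gcongr; exact Nat.choose_le_pow_div k N
          _ = (N * p / m) ^ k * ((m : ℝ) ^ k / k.factorial) := by
              rw [div_pow, mul_pow]
              field_simp
          _ ≤ (N * p / m) ^ m * ((m : ℝ) ^ k / k.factorial) := by
              gcongr
    _ ≤ (N * p / m) ^ m * Real.exp m := by
        rw [← mul_sum]
        gcongr
        exact Real.sum_le_exp_of_nonneg hm'.le _

lemma ten_pow_le_exp (k : ℕ) : (10 : ℝ) ^ k ≤ Real.exp (3 * k) := by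
  have h : (10 : ℝ) ≤ Real.exp 1 ^ 3 :=
    le_trans (by norm_num) (pow_le_pow_left₀ (by norm_num) Real.exp_one_gt_d9.le 3)
  calc (10 : ℝ) ^ k ≤ (Real.exp 1 ^ 3) ^ k := by gcongr
    _ = Real.exp (3 * k) := by rw [← pow_mul, ← Real.exp_nat_mul]; push_cast; ring_nf

lemma one_sub_pow_le_exp_neg {p : ℝ} (hp1 : p ≤ 1) (k : ℕ) :
    (1 - p) ^ k ≤ Real.exp (-(k * p)) := by
  calc (1 - p) ^ k ≤ Real.exp (-p) ^ k := by
        gcongr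
        exact Real.one_sub_le_exp_neg p
    _ = Real.exp (-(k * p)) := by rw [← Real.exp_nat_mul]; ring_nf

lemma Nat.half_le_floor {r : ℝ} (hr : 2 ≤ r) : r / 2 ≤ ⌊r⌋₊ := by
  linarith [Nat.lt_floor_add_one r]

section Graph

variable {n : ℕ}

abbrev PotentialEdge (n : ℕ) : Type := {e : Sym2 (Fin n) // ¬ e.IsDiag}

def graphOfFinset (S : Finset (PotentialEdge n)) : SimpleGraph (Fin n) :=
  SimpleGraph.fromEdgeSet (Subtype.val '' (S : Set (PotentialEdge n)))

open Classical in
noncomputable def toPotentialEdges (X : Set (Sym2 (Fin n))) : Finset (PotentialEdge n) :=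
  univ.filter (·.1 ∈ X)

lemma mem_toPotentialEdges {X : Set (Sym2 (Fin n))} {i : PotentialEdge n} :
    i ∈ toPotentialEdges X ↔ i.1 ∈ X := by
  simp [toPotentialEdges]

lemma image_val_toPotentialEdges {X : Set (Sym2 (Fin n))} (hX : ∀ e ∈ X, ¬ e.IsDiag) :
    Subtype.val '' (toPotentialEdges X : Set (PotentialEdge n)) = X := by
  ext e
  exact ⟨fun ⟨i, hi, he⟩ => he ▸ mem_toPotentialEdges.1 hi,
    fun he => ⟨⟨e, hX e he⟩, mem_toPotentialEdges.2 he, rfl⟩⟩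

lemma card_toPotentialEdges {X : Set (Sym2 (Fin n))} (hX : ∀ e ∈ X, ¬ e.IsDiag) :
    #(toPotentialEdges X) = X.ncard := by
  rw [← Set.ncard_coe_finset, ← Set.ncard_image_of_injective _ Subtype.val_injective,
    image_val_toPotentialEdges hX]

lemma graphOfFinset_toPotentialEdges (K : SimpleGraph (Fin n)) :
    graphOfFinset (toPotentialEdges K.edgeSet) = K := by
  rw [graphOfFinset, image_val_toPotentialEdges fun _ => K.not_isDiag_of_mem_edgeSet,
    SimpleGraph.fromEdgeSet_edgeSet]

lemma val_mem_edgeSet_graphOfFinset {S : Finset (PotentialEdge n)} {i : PotentialEdge n}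
    (hi : i ∈ S) : i.1 ∈ (graphOfFinset S).edgeSet := by
  rw [graphOfFinset, SimpleGraph.edgeSet_fromEdgeSet]
  exact ⟨⟨i, hi, rfl⟩, i.2⟩

lemma val_mem_edgeSet_graphOf {ω : PotentialEdge n → Bool} {i : PotentialEdge n} :
    i.1 ∈ (graphOf ω).edgeSet ↔ ω i = true := by
  simp [graphOf, i.2]

noncomputable def boosterSlots (U : Set (Fin n)) (K : SimpleGraph (Fin n)) :
    Finset (PotentialEdge n) :=
  toPotentialEdges (Sym2.map Subtype.val '' boosters (K.induce U))

lemma card_boosterSlots (U : Set (Fin n)) (K : SimpleGraph (Fin n)) :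
    #(boosterSlots U K) = (boosters (K.induce U)).ncard := by
  have hinj : Function.Injective (Sym2.map (Subtype.val : U → Fin n)) :=
    Sym2.map.injective Subtype.val_injective
  rw [boosterSlots, card_toPotentialEdges, Set.ncard_image_of_injective _ hinj]
  rintro _ ⟨e, he, rfl⟩
  exact (Sym2.isDiag_map Subtype.val_injective).not.2 he.1

lemma val_not_mem_edgeSet_of_mem_boosterSlots {U : Set (Fin n)} {K : SimpleGraph (Fin n)}
    {i : PotentialEdge n} (hi : i ∈ boosterSlots U K) : i.1 ∉ K.edgeSet := by
  obtain ⟨e, he, hei⟩ := mem_toPotentialEdges.1 hi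
  rw [← hei]
  induction e with
  | _ a b => simpa using he.2.1

lemma disjoint_boosterSlots (U : Set (Fin n)) (S : Finset (PotentialEdge n)) :
    Disjoint S (boosterSlots U (graphOfFinset S)) :=
  disjoint_left.2 fun _ hS hT =>
    val_not_mem_edgeSet_of_mem_boosterSlots hT (val_mem_edgeSet_graphOfFinset hS)

end Graph

section BadEvent

variable (n : ℕ) (p : ℝ)

noncomputable def edgeBudget : ℕ := ⌊p * n ^ 2 / 10 ^ 16⌋₊

noncomputable def boosterThreshold : ℕ := ⌈((n : ℝ) / 10 ^ 6) ^ 2 / 32⌉₊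

def BadEvent : Set (PotentialEdge n → Bool) :=
  {ω | ¬ ∀ U : Set (Fin n), (n : ℝ) / 10 ^ 6 ≤ U.ncard →
    ∀ H : (graphOf ω).Subgraph, U ⊆ H.verts →
      (H.edgeSet.ncard : ℝ) ≤ p * n ^ 2 / 10 ^ 16 →
      ManyBoosters H.spanningCoe U →
      ∃ e ∈ boosters ((H.spanningCoe).induce U),
        Sym2.map (Subtype.val : ↥U → Fin n) e ∈ (graphOf ω).edgeSet}

open Classical in
lemma badEvent_subset_biUnion_boolCylinder : BadEvent n p ⊆
    ⋃ x ∈ (univ : Finset (Set (Fin n) × Finset (PotentialEdge n))).filter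
      (fun x => #x.2 ≤ edgeBudget n p ∧
        boosterThreshold n ≤ #(boosterSlots x.1 (graphOfFinset x.2))),
      boolCylinder x.2 (boosterSlots x.1 (graphOfFinset x.2)) := by
  intro ω hω
  simp only [BadEvent, Set.mem_ofPred_eq, not_forall, not_exists, not_and] at hω
  obtain ⟨U, hU, H, -, hHe, hMany, hfail⟩ := hω
  set S := toPotentialEdges H.spanningCoe.edgeSet
  have hK : graphOfFinset S = H.spanningCoe := graphOfFinset_toPotentialEdges _
  have hS : #S = H.edgeSet.ncard := by
    rw [card_toPotentialEdges fun _ => SimpleGraph.not_isDiag_of_mem_edgeSet _,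
      SimpleGraph.Subgraph.edgeSet_spanningCoe]
  have hT : ((n : ℝ) / 10 ^ 6) ^ 2 / 32 ≤ #(boosterSlots U (graphOfFinset S)) := by
    rw [card_boosterSlots, hK]
    refine le_trans ?_ hMany
    gcongr
  simp only [Set.mem_iUnion, mem_filter, mem_univ, true_and, exists_prop]
  refine ⟨(U, S), ⟨Nat.le_floor (by rw [hS]; exact hHe), Nat.ceil_le.2 hT⟩, fun i hi => ?_,
    fun i hi => ?_⟩
  · rw [← val_mem_edgeSet_graphOf]
    exact H.edgeSet_subset (by simpa using mem_toPotentialEdges.1 hi)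
  · rw [hK] at hi
    obtain ⟨e, he, hei⟩ := mem_toPotentialEdges.1 hi
    have hi' := hfail e he
    rw [hei, val_mem_edgeSet_graphOf] at hi'
    simpa using hi'

end BadEvent

lemma gnp_badEvent_le {n : ℕ} {p : ℝ} (hp0 : 0 ≤ p) (hp1 : p ≤ 1) :
    gnp n p (BadEvent n p) ≤ ENNReal.ofReal (2 ^ n *
      (∑ k ∈ range (edgeBudget n p + 1), ((n.choose 2).choose k : ℝ) * p ^ k) *
        (1 - p) ^ boosterThreshold n) := by
  classical
  refine (pi_bern_le_of_subset_biUnion_boolCylinder hp0 hp1 _ _ _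
    (fun x _ => disjoint_boosterSlots x.1 x.2) (fun x hx => (mem_filter.1 hx).2.2)
    (badEvent_subset_biUnion_boolCylinder n p)).trans (ENNReal.ofReal_le_ofReal ?_)
  have hcard : Fintype.card (PotentialEdge n) = n.choose 2 := by
    rw [Sym2.card_subtype_not_diag, Fintype.card_fin]
  set 𝒮 := (univ : Finset (Finset (PotentialEdge n))).filter (#· ≤ edgeBudget n p)
  calc _ ≤ ∑ x ∈ univ ×ˢ 𝒮, p ^ #x.2 * (1 - p) ^ boosterThreshold n := by
        refine sum_le_sum_of_subset_of_nonneg (fun x hx => ?_) fun x _ _ => ?_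
        · simp only [𝒮, mem_filter, mem_univ, true_and, mem_product] at hx ⊢
          exact hx.1
        · have : 0 ≤ 1 - p := sub_nonneg.2 hp1
          positivity
    _ = 2 ^ n * (∑ S ∈ 𝒮, p ^ #S) * (1 - p) ^ boosterThreshold n := by
        simp only [sum_product, sum_const, card_univ, Fintype.card_set, Fintype.card_fin,
          ← sum_mul, nsmul_eq_mul]
        push_cast
        ring
    _ ≤ _ := by
        have : 0 ≤ 1 - p := sub_nonneg.2 hp1
        gcongr
        rw [← hcard]
        exact sum_pow_card_filter_card_le hp0 _

section Estimates

variable {n : ℕ} {p : ℝ}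

lemma sum_choose_edgeBudget_le (hnp : 10 ^ 15 ≤ n * p) (hp1 : p ≤ 1) :
    ∑ k ∈ range (edgeBudget n p + 1), ((n.choose 2).choose k : ℝ) * p ^ k ≤
      Real.exp (49 * (p * n ^ 2 / 10 ^ 16)) := by
  set r := p * n ^ 2 / 10 ^ 16
  set m := edgeBudget n p
  have hn : (10 : ℝ) ^ 15 ≤ n := by nlinarith
  have hp0 : 0 < p := by nlinarith
  have hr : n / 10 ≤ r := by
    simp only [r]
    nlinarith
  have hm : r / 2 ≤ m := Nat.half_le_floor (by linarith)
  have hmr : (m : ℝ) ≤ r := Nat.floor_le (by positivity)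
  have hN : ((n.choose 2 : ℕ) : ℝ) * p = p * n * (n - 1) / 2 := by
    rw [Nat.cast_choose_two]; ring
  have hrN : r ≤ p * n * (n - 1) / 2 := by
    simp only [r]
    nlinarith
  have hNr : p * n * (n - 1) / 2 ≤ 10 ^ 16 * r / 2 := by
    simp only [r]
    nlinarith
  have hmN : (m : ℝ) ≤ (n.choose 2 : ℕ) * p := by
    rw [hN]
    linarith
  have hratio : ((n.choose 2 : ℕ) : ℝ) * p / m ≤ 10 ^ 16 := by
    rw [div_le_iff₀ (by linarith), hN]
    linarith
  calc _ ≤ (((n.choose 2 : ℕ) : ℝ) * p / m) ^ m * Real.exp m :=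
        sum_choose_mul_pow_le hp0.le (by exact_mod_cast (show (0 : ℝ) < m by linarith)) hmN
    _ ≤ Real.exp (48 * m) * Real.exp m := by
        gcongr
        calc _ ≤ ((10 : ℝ) ^ 16) ^ m := by gcongr
          _ ≤ Real.exp (48 * m) := by
              rw [← pow_mul]
              refine (ten_pow_le_exp _).trans_eq ?_
              push_cast; ring_nf
    _ ≤ Real.exp (49 * r) := by
        rw [← Real.exp_add]
        gcongr
        linarith

lemma one_sub_pow_boosterThreshold_le (hp0 : 0 ≤ p) (hp1 : p ≤ 1) :
    (1 - p) ^ boosterThreshold n ≤ Real.exp (-(312 * (p * n ^ 2 / 10 ^ 16))) := by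
  refine (one_sub_pow_le_exp_neg hp1 _).trans (Real.exp_le_exp.2 ?_)
  have hb : ((n : ℝ) / 10 ^ 6) ^ 2 / 32 ≤ boosterThreshold n := Nat.le_ceil _
  nlinarith

lemma unionBound_le_exp_neg (hnp : 10 ^ 15 ≤ n * p) (hp1 : p ≤ 1) :
    2 ^ n * (∑ k ∈ range (edgeBudget n p + 1), ((n.choose 2).choose k : ℝ) * p ^ k) *
      (1 - p) ^ boosterThreshold n ≤ Real.exp (-n) := by
  have hp0 : 0 ≤ p := by nlinarith
  have hr : n / 10 ≤ p * n ^ 2 / 10 ^ 16 := by nlinarith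
  have h2 : (2 : ℝ) ^ n ≤ Real.exp n := by
    calc (2 : ℝ) ^ n ≤ Real.exp 1 ^ n := by gcongr; linarith [Real.add_one_le_exp 1]
      _ = Real.exp n := by rw [← Real.exp_nat_mul, mul_one]
  calc _ ≤ Real.exp n * Real.exp (49 * (p * n ^ 2 / 10 ^ 16)) *
        Real.exp (-(312 * (p * n ^ 2 / 10 ^ 16))) := by
        gcongr
        exacts [sum_choose_edgeBudget_le hnp hp1, one_sub_pow_boosterThreshold_le hp0 hp1]
    _ ≤ Real.exp (-n) := by
        rw [← Real.exp_add, ← Real.exp_add]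
        gcongr
        linarith

end Estimates

lemma eventually_exp_neg_le_div_sq {ε : ℝ} (hε : 0 < ε) :
    ∀ᶠ n : ℕ in Filter.atTop, Real.exp (-n) ≤ ε / n ^ 2 := by
  have h := (Real.tendsto_pow_mul_exp_neg_atTop_nhds_zero 2).comp tendsto_natCast_atTop_atTop
  filter_upwards [h.eventually (gt_mem_nhds hε), Filter.eventually_ge_atTop 1] with n hn hn1
  have : (0 : ℝ) < n := by exact_mod_cast hn1
  rw [le_div_iff₀ (by positivity), mul_comm]
  exact hn.le

/-- Suppose `np ≥ 10^15`.  Then with probability `1 − o(n^{−2})`, uniformly over all `p`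
with `10^15/n ≤ p ≤ 1`, the random graph `G = G(n,p)` has the following property: for
every set `U ⊆ V(G)` with `|U| ≥ n/10^6` and every subgraph `H` of `G` with
`U ⊆ V(H)` and at most `p·n²/10^16` edges such that `U` has many boosters in `H`, at
least one of these boosters is an edge of `G`. -/
theorem statement_11 :
    ∀ ε : ℝ, 0 < ε → ∃ N : ℕ, ∀ n : ℕ, N ≤ n → ∀ p : ℝ,
      (10 : ℝ) ^ 15 ≤ n * p → p ≤ 1 →
      gnp n p
        {ω | ¬ ∀ U : Set (Fin n), (n : ℝ) / 10 ^ 6 ≤ U.ncard →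
          ∀ H : (graphOf ω).Subgraph, U ⊆ H.verts →
            (H.edgeSet.ncard : ℝ) ≤ p * n ^ 2 / 10 ^ 16 →
            ManyBoosters H.spanningCoe U →
            ∃ e ∈ boosters ((H.spanningCoe).induce U),
              Sym2.map (Subtype.val : ↥U → Fin n) e ∈ (graphOf ω).edgeSet}
        ≤ ENNReal.ofReal (ε / n ^ 2) := by
  intro ε hε
  obtain ⟨N, hN⟩ := Filter.eventually_atTop.1 (eventually_exp_neg_le_div_sq hε)
  refine ⟨N, fun n hn p hnp hp1 => ?_⟩
  have hp0 : 0 ≤ p := by nlinarith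
  calc gnp n p (BadEvent n p) ≤ _ := gnp_badEvent_le hp0 hp1
    _ ≤ ENNReal.ofReal (ε / n ^ 2) :=
      ENNReal.ofReal_le_ofReal ((unionBound_le_exp_neg hnp hp1).trans (hN n hn))
end

section
/- Suppose p satisfies 10^8/n ≤ p ≤ (log n)³/n, and set d = np/(10^6·log(np)), m = 160·log(np)/p and D = np/100. Then with probability 1 − o(n^{−2}) (uniformly over all such p), the random graph G = G(n,p) contains no two disjoint vertex sets A and B with 0 < |A| ≤ m, |B| ≤ d·|A| and at least D·|A| edges of G between A and B. -/
open MeasureTheory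

/-- The number of edges between two disjoint vertex sets `A` and `B`, counted as the
number of ordered pairs `(a,b) ∈ A × B` with `a` adjacent to `b`. -/
noncomputable def edgesBetween {V : Type*} (G : SimpleGraph V) (A B : Set V) : ℕ :=
  ({q : V × V | q.1 ∈ A ∧ q.2 ∈ B ∧ G.Adj q.1 q.2}).ncard

section auxreal

lemma exp18_le : Real.exp 18 ≤ 10 ^ 8 := by
  have h : Real.exp 18 = Real.exp 1 ^ 18 := by
    rw [← Real.exp_nat_mul]; norm_num
  have h2 : Real.exp 1 ^ 18 ≤ 2.7182818286 ^ 18 :=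
    pow_le_pow_left₀ (Real.exp_pos 1).le Real.exp_one_lt_d9.le 18
  rw [h]; refine h2.trans (by norm_num)

lemma exp13_le : Real.exp 13 ≤ 10 ^ 6 := by
  have h : Real.exp 13 = Real.exp 1 ^ 13 := by
    rw [← Real.exp_nat_mul]; norm_num
  have h2 : Real.exp 1 ^ 13 ≤ 2.7182818286 ^ 13 :=
    pow_le_pow_left₀ (Real.exp_pos 1).le Real.exp_one_lt_d9.le 13
  rw [h]; refine h2.trans (by norm_num)

lemma le_exp5 : (100 : ℝ) ≤ Real.exp 5 := by
  have h : Real.exp 5 = Real.exp 1 ^ 5 := by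
    rw [← Real.exp_nat_mul]; norm_num
  have h2 : (2.7182818283 : ℝ) ^ 5 ≤ Real.exp 1 ^ 5 :=
    pow_le_pow_left₀ (by norm_num) Real.exp_one_gt_d9.le 5
  rw [h]; refine le_trans (by norm_num) h2

lemma log_160_le : Real.log 160 ≤ 5.55 := by
  have h1 : Real.log 160 ≤ Real.log 256 := by
    apply Real.log_le_log (by norm_num) (by norm_num)
  have h2 : (256 : ℝ) = 2 ^ 8 := by norm_num
  have h3 : Real.log 256 = 8 * Real.log 2 := by rw [h2, Real.log_pow]; norm_num
  have := Real.log_two_lt_d9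
  nlinarith

lemma log_1e6_ge : (13 : ℝ) ≤ Real.log (10 ^ 6) := by
  rw [Real.le_log_iff_exp_le (by norm_num)]
  exact exp13_le

lemma log_100e_le : Real.log (100 * Real.exp 1) ≤ 6 := by
  rw [Real.log_mul (by norm_num) (Real.exp_ne_zero 1), Real.log_exp]
  have : Real.log 100 ≤ 5 := by
    rw [Real.log_le_iff_le_exp (by norm_num)]; exact le_exp5
  linarith

lemma log_le_two_sqrt {x : ℝ} (hx : 1 ≤ x) : Real.log x ≤ 2 * Real.sqrt x := by
  have h0 : (0 : ℝ) < x := by linarith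
  have h1 := Real.log_le_sub_one_of_pos (Real.sqrt_pos.2 h0)
  rw [Real.log_sqrt h0.le] at h1
  nlinarith [Real.sqrt_nonneg x]

lemma xlog_mono {c x y : ℝ} (hx : 1 ≤ x) (hxy : x ≤ y) (hyc : y ≤ c) :
    x * (1 + Real.log c - Real.log x) ≤ y * (1 + Real.log c - Real.log y) := by
  have hx0 : (0 : ℝ) < x := by linarith
  have hy0 : (0 : ℝ) < y := by linarith
  have hlog : x * (Real.log y - Real.log x) ≤ y - x := by
    have h1 : Real.log y - Real.log x = Real.log (y / x) := by
      rw [Real.log_div hy0.ne' hx0.ne']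
    have h2 : Real.log (y / x) ≤ y / x - 1 := Real.log_le_sub_one_of_pos (by positivity)
    rw [h1]
    calc x * Real.log (y / x) ≤ x * (y / x - 1) := by
          exact mul_le_mul_of_nonneg_left h2 hx0.le
      _ = y - x := by field_simp
  have hcy : Real.log y ≤ Real.log c := Real.log_le_log hy0 hyc
  nlinarith [mul_nonneg (sub_nonneg.2 hxy) (sub_nonneg.2 hcy)]

lemma pow_le_factorial_mul_exp (a : ℕ) : (a : ℝ) ^ a ≤ a.factorial * Real.exp a := by
  induction a with
  | zero => simp
  | succ a ih =>
    rcases Nat.eq_zero_or_pos a with h | h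
    · subst h
      simp [Nat.factorial]
    · have ha : (0 : ℝ) < a := by exact_mod_cast h
      have e1 : (1 + 1 / (a : ℝ)) ≤ Real.exp (1 / a) := by
        have := Real.add_one_le_exp (1 / (a : ℝ)); linarith
      have e2 : (1 + 1 / (a : ℝ)) ^ a ≤ Real.exp (1 / a) ^ a :=
        pow_le_pow_left₀ (by positivity) e1 a
      have e3 : Real.exp (1 / (a : ℝ)) ^ a = Real.exp 1 := by
        rw [← Real.exp_nat_mul]
        congr 1
        field_simp
      have e4 : ((a : ℝ) + 1) ^ a = (a : ℝ) ^ a * (1 + 1 / (a : ℝ)) ^ a := by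
        rw [← mul_pow]
        congr 1
        field_simp
      have e5 : ((a : ℝ) + 1) ^ (a + 1) = ((a : ℝ) + 1) * ((a : ℝ) + 1) ^ a := by ring
      have e6 : ((a : ℝ) + 1) ^ a ≤ (a : ℝ) ^ a * Real.exp 1 := by
        rw [e4, ← e3]
        exact mul_le_mul_of_nonneg_left e2 (by positivity)
      have e7 : ((a : ℝ) + 1) ^ (a + 1) ≤ ((a : ℝ) + 1) * ((a : ℝ) ^ a * Real.exp 1) := by
        rw [e5]
        exact mul_le_mul_of_nonneg_left e6 (by positivity)
      have e8 : (a : ℝ) ^ a * Real.exp 1 ≤ (a.factorial * Real.exp a) * Real.exp 1 :=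
        mul_le_mul_of_nonneg_right ih (Real.exp_pos 1).le
      have e9 : ((a + 1 : ℕ) : ℝ) ^ (a + 1) = ((a : ℝ) + 1) ^ (a + 1) := by push_cast; ring
      have e10 : ((a + 1).factorial : ℝ) * Real.exp ((a + 1 : ℕ) : ℝ)
          = ((a : ℝ) + 1) * ((a.factorial * Real.exp a) * Real.exp 1) := by
        rw [Nat.factorial_succ]
        push_cast
        rw [Real.exp_add]
        ring
      rw [e9, e10]
      exact e7.trans (mul_le_mul_of_nonneg_left e8 (by positivity))
  
lemma choose_le_exp (N j : ℕ) (hj : 1 ≤ j) (hN : 1 ≤ N) :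
    (N.choose j : ℝ) ≤ Real.exp (j * (1 + Real.log N - Real.log j)) := by
  have hj0 : (0 : ℝ) < j := by exact_mod_cast hj
  have hN0 : (0 : ℝ) < N := by exact_mod_cast hN
  have h1 : (N.choose j : ℝ) * j.factorial ≤ (N : ℝ) ^ j := by
    have : N.choose j * j.factorial ≤ N ^ j := by
      calc N.choose j * j.factorial = j.factorial * N.choose j := mul_comm _ _
        _ = N.descFactorial j := (Nat.descFactorial_eq_factorial_mul_choose N j).symm
        _ ≤ N ^ j := Nat.descFactorial_le_pow N j
    exact_mod_cast this
  have h2 : (N.choose j : ℝ) * (j : ℝ) ^ j ≤ (N : ℝ) ^ j * Real.exp j := by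
    calc (N.choose j : ℝ) * (j : ℝ) ^ j ≤ (N.choose j : ℝ) * (j.factorial * Real.exp j) :=
          mul_le_mul_of_nonneg_left (pow_le_factorial_mul_exp j) (Nat.cast_nonneg _)
      _ = ((N.choose j : ℝ) * j.factorial) * Real.exp j := by ring
      _ ≤ (N : ℝ) ^ j * Real.exp j := mul_le_mul_of_nonneg_right h1 (Real.exp_pos _).le
  have hNpow : (N : ℝ) ^ j = Real.exp (j * Real.log N) := by
    rw [Real.exp_nat_mul, Real.exp_log hN0]
  have hjpow : (j : ℝ) ^ j = Real.exp (j * Real.log j) := by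
    rw [Real.exp_nat_mul, Real.exp_log hj0]
  have h3 : (N.choose j : ℝ) * Real.exp (j * Real.log j)
      ≤ Real.exp (j * Real.log N) * Real.exp j := by
    rw [← hNpow, ← hjpow]; exact h2
  have h4 : (N.choose j : ℝ) ≤ Real.exp (j * Real.log N) * Real.exp j / Real.exp (j * Real.log j) := by
    rw [le_div_iff₀ (Real.exp_pos _)]
    exact h3
  refine h4.trans_eq ?_
  rw [← Real.exp_add, ← Real.exp_sub]
  congr 1
  ring

end auxreal

set_option maxHeartbeats 1000000 in
lemma core_ineq {n p a b : ℝ} (hP : 10 ^ 8 ≤ n * p) (hP2 : n * p ≤ (Real.log n) ^ 3)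
    (hp : 0 < p) (ha1 : 1 ≤ a) (ham : a ≤ 160 * Real.log (n * p) / p)
    (hb1 : 1 ≤ b) (hbd : b ≤ n * p / (10 ^ 6 * Real.log (n * p)) * a) :
    a * (1 + Real.log n - Real.log a) + b * (1 + Real.log n - Real.log b)
      + n * p / 100 * a * (Real.log (100 * Real.exp 1) + Real.log b - Real.log n)
      ≤ -6 * Real.log n := by
  have hP0 : (0 : ℝ) < n * p := lt_of_lt_of_le (by norm_num) hP
  have hn0 : (0 : ℝ) < n := by
    have h : n = n * p / p := by field_simp
    rw [h]; positivity
  have ha0 : (0 : ℝ) < a := by linarith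
  have hb0 : (0 : ℝ) < b := by linarith
  set ln := Real.log n with hlndef
  clear_value ln
  set L := Real.log (n * p) with hLdef
  clear_value L
  set c1 := Real.log (100 * Real.exp 1) with hc1def
  clear_value c1
  set M6 := Real.log ((10 : ℝ) ^ 6) with hM6def
  clear_value M6
  have hln400 : 400 ≤ ln := by
    have hcube : (10:ℝ) ^ 8 ≤ ln ^ 3 := le_trans hP hP2
    nlinarith [hcube, sq_nonneg (ln + 200), sq_nonneg (ln - 400), sq_nonneg ln]
  have hL18 : 18 ≤ L := by
    rw [hLdef]; exact (Real.le_log_iff_exp_le hP0).2 (exp18_le.trans hP)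
  have hL0 : (0 : ℝ) < L := by linarith
  have hlL0 : 0 ≤ Real.log L := Real.log_nonneg (by linarith)
  have hlnpos : (0 : ℝ) < ln := by linarith
  have hla0 : 0 ≤ Real.log a := Real.log_nonneg ha1
  have hlb0 : 0 ≤ Real.log b := Real.log_nonneg hb1
  have hc1le : c1 ≤ 6 := by rw [hc1def]; exact log_100e_le
  have hM13 : 13 ≤ M6 := by rw [hM6def]; exact log_1e6_ge
  have hd0 : (0 : ℝ) < n * p / (10 ^ 6 * L) := by positivity
  set β := n * p / (10 ^ 6 * L) * a with hβdef
  clear_value β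
  have hβb : b ≤ β := hbd
  have hβ1 : 1 ≤ β := hb1.trans hβb
  have hβn : β ≤ n := by
    rw [hβdef]
    have h1 : n * p / (10 ^ 6 * L) * a ≤ n * p / (10 ^ 6 * L) * (160 * L / p) :=
      mul_le_mul_of_nonneg_left ham hd0.le
    have h2 : n * p / (10 ^ 6 * L) * (160 * L / p) = 160 / 10 ^ 6 * n := by
      field_simp
    rw [h2] at h1
    linarith
  have hmono : b * (1 + ln - Real.log b) ≤ β * (1 + ln - Real.log β) := by
    rw [hlndef]; exact xlog_mono hb1 hβb hβn
  have hlogb : Real.log b ≤ Real.log β := Real.log_le_log hb0 hβb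
  have hcoef : (0 : ℝ) ≤ n * p / 100 * a := by positivity
  have step1 : a * (1 + ln - Real.log a) + b * (1 + ln - Real.log b)
      + n * p / 100 * a * (c1 + Real.log b - ln)
      ≤ a * (1 + ln - Real.log a) + β * (1 + ln - Real.log β)
      + n * p / 100 * a * (c1 + Real.log β - ln) := by
    have h := mul_le_mul_of_nonneg_left
      (show c1 + Real.log b - ln ≤ c1 + Real.log β - ln by linarith) hcoef
    linarith
  have hlogβ : Real.log β = L + Real.log a - (M6 + Real.log L) := by
    rw [hβdef, Real.log_mul (ne_of_gt hd0) (ne_of_gt ha0),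
      Real.log_div (ne_of_gt hP0) (by positivity),
      Real.log_mul (by norm_num) (ne_of_gt hL0)]
    rw [hLdef, hM6def]
    norm_num
    ring
  set W := ln - L - Real.log a + M6 + Real.log L - c1 with hWdef
  clear_value W
  have hlogp : Real.log p = L - ln := by
    have hpn : p = n * p / n := by field_simp
    rw [hLdef, hlndef]
    nth_rewrite 1 [hpn]
    rw [Real.log_div (ne_of_gt hP0) (ne_of_gt hn0)]
  have hla : Real.log a ≤ Real.log 160 + Real.log L - (L - ln) := by
    have h1 : Real.log a ≤ Real.log (160 * L / p) := Real.log_le_log ha0 ham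
    rw [Real.log_div (by positivity) (ne_of_gt hp),
      Real.log_mul (by norm_num) (ne_of_gt hL0), hlogp] at h1
    linarith
  have hW14 : 1.4 ≤ W := by
    have := log_160_le
    rw [hWdef]
    linarith
  have hA : β * (7 + W) ≤ n * p / 300 * a * W := by
    have key : 300 * (7 + W) ≤ 10 ^ 6 * L * W := by
      linarith [mul_nonneg (show (0:ℝ) ≤ L - 18 by linarith) (show (0:ℝ) ≤ W - 1.4 by linarith)]
    have h1 : β * (7 + W) = n * p * a * (7 + W) / (10 ^ 6 * L) := by
      rw [hβdef]; ring
    have h2 : n * p / 300 * a * W = n * p * a * W / 300 := by ring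
    rw [h1, h2, div_le_div_iff₀ (by positivity) (by norm_num)]
    have h3 : 0 ≤ (10 ^ 6 * L * W - 300 * (7 + W)) * (n * p * a) := by
      apply mul_nonneg (by linarith) (by positivity)
    linarith [h3]
  have hB : a * (W + L) ≤ n * p / 300 * a * W := by
    have key : W + L ≤ n * p / 300 * W := by
      set s := Real.sqrt (n * p) with hsdef
      have hs : s * s = n * p := Real.mul_self_sqrt hP0.le
      have hs4 : (10 : ℝ) ^ 4 ≤ s := by
        rw [hsdef, Real.le_sqrt (by norm_num) hP0.le]
        norm_num
        linarith
      have hs0 : (0 : ℝ) ≤ s := by linarith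
      have hss' : (10 : ℝ) ^ 8 ≤ s * s := by
        have := mul_le_mul hs4 hs4 (by norm_num) hs0
        norm_num at this ⊢
        linarith
      have hLs : L ≤ 2 * s := by
        rw [hLdef, hsdef]; exact log_le_two_sqrt (by linarith)
      have hprod : 0 ≤ (s * s / 300 - 1) * (W - 1.4) :=
        mul_nonneg (by linarith) (by linarith)
      have hkey' : W + L ≤ s * s / 300 * W := by
        linarith [hprod, sq_nonneg (s - 10 ^ 4), hLs]
      calc W + L ≤ s * s / 300 * W := hkey'
        _ = n * p / 300 * W := by rw [hs]
    calc a * (W + L) ≤ a * (n * p / 300 * W) := mul_le_mul_of_nonneg_left key ha0.le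
      _ = n * p / 300 * a * W := by ring
  have hC : 6 * ln ≤ n * p / 300 * a * W := by
    rcases le_or_gt ln a with h | h
    · have h1 : 1.4 * ln ≤ a * W := by
        linarith [mul_nonneg ha0.le (show (0:ℝ) ≤ W - 1.4 by linarith)]
      calc 6 * ln ≤ 10 ^ 8 / 300 * (1.4 * ln) := by linarith
        _ ≤ n * p / 300 * (a * W) := by
            apply mul_le_mul (by linarith) h1 (by positivity) (by positivity)
        _ = n * p / 300 * a * W := by ring
    · have hla2 : Real.log a ≤ Real.log ln := Real.log_le_log ha0 h.le
      have hΛs : Real.log ln ≤ 2 * Real.sqrt ln := log_le_two_sqrt (by linarith)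
      have hL3 : L ≤ 3 * Real.log ln := by
        have h2 := Real.log_le_log hP0 hP2
        rw [Real.log_pow] at h2
        push_cast at h2
        rw [hLdef]
        linarith
      have hsln : 20 ≤ Real.sqrt ln := by
        rw [Real.le_sqrt (by norm_num) (by linarith)]
        norm_num
        linarith
      have hss : Real.sqrt ln * Real.sqrt ln = ln := Real.mul_self_sqrt (by linarith)
      have hWhalf : ln / 2 ≤ W := by
        rw [hWdef]
        linarith [sq_nonneg (Real.sqrt ln - 16), hss, hsln, hla2, hΛs, hL3]
      calc 6 * ln ≤ 10 ^ 8 / 300 * (1 * (ln / 2)) := by linarith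
        _ ≤ n * p / 300 * (a * W) := by
            apply mul_le_mul (by linarith)
              (mul_le_mul ha1 hWhalf (by linarith) ha0.le) (by linarith) (by positivity)
        _ = n * p / 300 * a * W := by ring
  have hexp1 : a * (1 + ln - Real.log a) ≤ a * (W + L) := by
    have h0 : 1 + ln - Real.log a = 1 + W + c1 + L - M6 - Real.log L := by
      rw [hWdef]; ring
    rw [h0]
    apply mul_le_mul_of_nonneg_left (by linarith) ha0.le
  have hexp2 : β * (1 + ln - Real.log β) ≤ β * (7 + W) := by
    have h0 : 1 + ln - Real.log β = 1 + W + c1 := by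
      rw [hlogβ, hWdef]; ring
    rw [h0]
    apply mul_le_mul_of_nonneg_left (by linarith) (by linarith)
  have hexp3 : n * p / 100 * a * (c1 + Real.log β - ln) = -(n * p / 100 * a * W) := by
    rw [hlogβ, hWdef]; ring
  have h3G : n * p / 100 * a * W = 3 * (n * p / 300 * a * W) := by ring
  linarith [step1, hexp1, hexp2, hexp3, hA, hB, hC, h3G]

lemma choose_le_pow_form (N j : ℕ) (hj : 1 ≤ j) (hN : 1 ≤ N) :
    (N.choose j : ℝ) ≤ (Real.exp 1 * N / j) ^ j := by
  have hj0 : (0 : ℝ) < j := by exact_mod_cast hj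
  have hN0 : (0 : ℝ) < N := by exact_mod_cast hN
  have hlog : Real.log (Real.exp 1 * N / j) = 1 + Real.log N - Real.log j := by
    rw [Real.log_div (by positivity) hj0.ne', Real.log_mul (Real.exp_ne_zero 1) hN0.ne',
      Real.log_exp]
  have h : Real.exp ((j : ℝ) * (1 + Real.log N - Real.log j)) = (Real.exp 1 * N / j) ^ j := by
    rw [← hlog, Real.exp_nat_mul, Real.exp_log (by positivity)]
  exact (choose_le_exp N j hj hN).trans h.le

set_option maxHeartbeats 1000000 in
lemma term_bound {n a b : ℕ} {p : ℝ} (hp : 0 < p)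
    (hP : 10 ^ 8 ≤ (n : ℝ) * p) (hP2 : (n : ℝ) * p ≤ Real.log n ^ 3)
    (ha1 : 1 ≤ a) (ham : (a : ℝ) ≤ 160 * Real.log ((n : ℝ) * p) / p)
    (hbd : (b : ℝ) ≤ (n : ℝ) * p / (10 ^ 6 * Real.log ((n : ℝ) * p)) * a) :
    (n.choose a : ℝ) * (n.choose b : ℝ) * ((a * b).choose ⌈(n : ℝ) * p / 100 * a⌉₊ : ℝ)
      * p ^ ⌈(n : ℝ) * p / 100 * a⌉₊ ≤ Real.exp (-6 * Real.log n) := by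
  have hP0 : (0 : ℝ) < n * p := lt_of_lt_of_le (by norm_num) hP
  have hn0 : (0 : ℝ) < n := by
    have h : (n : ℝ) = n * p / p := by field_simp
    rw [h]; positivity
  have hnn : 0 < n := by exact_mod_cast hn0
  have ha0 : (0 : ℝ) < a := by exact_mod_cast ha1
  set k := ⌈(n : ℝ) * p / 100 * a⌉₊ with hkdef
  have hk1 : 1 ≤ k := Nat.ceil_pos.2 (by positivity)
  have hka : (n : ℝ) * p / 100 * a ≤ k := Nat.le_ceil _
  rcases Nat.eq_zero_or_pos b with hb0 | hb1
  · subst hb0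
    have h0 : (a * 0).choose k = 0 := by
      rw [Nat.mul_zero]; exact Nat.choose_eq_zero_of_lt hk1
    rw [h0]
    simp only [Nat.cast_zero, mul_zero, zero_mul]
    positivity
  rcases lt_or_ge (a * b) k with hkab | hkab
  · rw [Nat.choose_eq_zero_of_lt hkab]
    simp only [Nat.cast_zero, mul_zero, zero_mul]
    positivity
  · have hb0' : (0 : ℝ) < b := by exact_mod_cast hb1
    have hab1 : 1 ≤ a * b := Nat.mul_pos ha1 hb1
    have h1 : (n.choose a : ℝ) ≤ Real.exp (a * (1 + Real.log n - Real.log a)) :=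
      choose_le_exp n a ha1 hnn
    have h2 : (n.choose b : ℝ) ≤ Real.exp (b * (1 + Real.log n - Real.log b)) :=
      choose_le_exp n b hb1 hnn
    set q := 100 * Real.exp 1 * b / n with hqdef
    have hq0 : 0 < q := by positivity
    have he3 : Real.exp 1 ≤ 3 := by linarith [Real.exp_one_lt_d9]
    have hL18 : (18 : ℝ) ≤ Real.log ((n : ℝ) * p) := (Real.le_log_iff_exp_le hP0).2 (exp18_le.trans hP)
    have hL0 : (0 : ℝ) < Real.log ((n : ℝ) * p) := by linarith
    have hb16 : (b : ℝ) ≤ 160 / 10 ^ 6 * n := by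
      have hd0 : (0 : ℝ) < (n : ℝ) * p / (10 ^ 6 * Real.log ((n : ℝ) * p)) := by positivity
      have h3 : (b : ℝ) ≤ (n : ℝ) * p / (10 ^ 6 * Real.log ((n : ℝ) * p))
          * (160 * Real.log ((n : ℝ) * p) / p) :=
        le_trans hbd (mul_le_mul_of_nonneg_left ham hd0.le)
      have h4 : (n : ℝ) * p / (10 ^ 6 * Real.log ((n : ℝ) * p))
          * (160 * Real.log ((n : ℝ) * p) / p) = 160 / 10 ^ 6 * n := by
        field_simp
      rw [h4] at h3; exact h3
    have hq1 : q ≤ 1 := by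
      rw [hqdef, div_le_one hn0]
      linarith [mul_le_mul_of_nonneg_right he3 hb0'.le, hb16, hn0]
    have h5 : ((a * b).choose k : ℝ) ≤ (Real.exp 1 * ((a * b : ℕ) : ℝ) / k) ^ k :=
      choose_le_pow_form (a * b) k hk1 hab1
    have hk0 : (0 : ℝ) < k := by exact_mod_cast hk1
    have h6 : (Real.exp 1 * ((a * b : ℕ) : ℝ) / k) * p ≤ q := by
      rw [hqdef, div_mul_eq_mul_div, div_le_div_iff₀ hk0 hn0]
      push_cast
      linarith [mul_le_mul_of_nonneg_left hka (by positivity : (0 : ℝ) ≤ Real.exp 1 * b)]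
    have h7 : ((a * b).choose k : ℝ) * p ^ k ≤ q ^ k := by
      calc ((a * b).choose k : ℝ) * p ^ k
          ≤ (Real.exp 1 * ((a * b : ℕ) : ℝ) / k) ^ k * p ^ k :=
            mul_le_mul_of_nonneg_right h5 (by positivity)
        _ = ((Real.exp 1 * ((a * b : ℕ) : ℝ) / k) * p) ^ k := (mul_pow _ _ _).symm
        _ ≤ q ^ k := pow_le_pow_left₀ (by positivity) h6 k
    have h8 : q ^ k ≤ Real.exp ((n : ℝ) * p / 100 * a * Real.log q) := by
      have h9 : q ^ ((k : ℝ)) ≤ q ^ ((n : ℝ) * p / 100 * a) :=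
        Real.rpow_le_rpow_of_exponent_ge hq0 hq1 hka
      rw [Real.rpow_natCast, Real.rpow_def_of_pos hq0] at h9
      exact h9.trans_eq (by rw [mul_comm])
    have hlq : Real.log q = Real.log (100 * Real.exp 1) + Real.log b - Real.log n := by
      rw [hqdef, Real.log_div (by positivity) hn0.ne', Real.log_mul (by positivity) hb0'.ne']
    have hcore := core_ineq (n := (n : ℝ)) (p := p) (a := (a : ℝ)) (b := (b : ℝ)) hP hP2 hp
      (by exact_mod_cast ha1) ham (by exact_mod_cast hb1) hbd
    calc (n.choose a : ℝ) * (n.choose b : ℝ) * ((a * b).choose k : ℝ) * p ^ k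
        = ((n.choose a : ℝ) * (n.choose b : ℝ)) * (((a * b).choose k : ℝ) * p ^ k) := by ring
      _ ≤ (Real.exp ((a : ℝ) * (1 + Real.log n - Real.log a))
          * Real.exp ((b : ℝ) * (1 + Real.log n - Real.log b)))
          * (((a * b).choose k : ℝ) * p ^ k) := by
          apply mul_le_mul_of_nonneg_right
            (mul_le_mul h1 h2 (by positivity) (by positivity)) (by positivity)
      _ ≤ (Real.exp ((a : ℝ) * (1 + Real.log n - Real.log a))
          * Real.exp ((b : ℝ) * (1 + Real.log n - Real.log b)))
          * Real.exp ((n : ℝ) * p / 100 * a * Real.log q) :=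
          mul_le_mul_of_nonneg_left (h7.trans h8) (by positivity)
      _ = Real.exp ((a : ℝ) * (1 + Real.log n - Real.log a)
          + (b : ℝ) * (1 + Real.log n - Real.log b)
          + (n : ℝ) * p / 100 * a * Real.log q) := by
          rw [← Real.exp_add, ← Real.exp_add]
      _ ≤ Real.exp (-6 * Real.log n) := by
          apply Real.exp_le_exp.2
          rw [hlq]
          linarith [hcore]

section measurepart

variable {n : ℕ} {p : ℝ}

/-- cylinder event -/
def cylSet (n : ℕ) (S : Finset (Sym2 (Fin n))) : Set ({e : Sym2 (Fin n) // ¬ e.IsDiag} → Bool) :=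
  {ω | ∀ e ∈ S, ∀ h : ¬ e.IsDiag, ω ⟨e, h⟩ = true}

lemma cyl_measure (n : ℕ) (p : ℝ) (hp0 : 0 ≤ p) (hp1 : p ≤ 1)
    (S : Finset (Sym2 (Fin n))) (hS : ∀ e ∈ S, ¬ e.IsDiag) :
    gnp n p (cylSet n S) = ENNReal.ofReal p ^ S.card := by
  classical
  have hbt : bern p {true} = ENNReal.ofReal p := by
    simp [bern]
  have hbu : bern p (Set.univ : Set Bool) = 1 := by
    simp only [bern, Measure.coe_add, Pi.add_apply, Measure.coe_smul, Pi.smul_apply,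
      smul_eq_mul, measure_univ, mul_one]
    rw [← ENNReal.ofReal_add hp0 (by linarith)]
    norm_num
  have hset : cylSet n S
      = Set.pi Set.univ (fun i : {e : Sym2 (Fin n) // ¬ e.IsDiag} =>
          if (i : Sym2 (Fin n)) ∈ S then ({true} : Set Bool) else Set.univ) := by
    ext ω
    simp only [cylSet, Set.mem_setOf_eq, Set.mem_pi, Set.mem_univ, forall_true_left]
    constructor
    · intro h i
      split_ifs with hi
      · simpa using h i.1 hi i.2
      · trivial
    · intro h e he hd
      have h2 := h ⟨e, hd⟩
      rw [if_pos he] at h2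
      simpa using h2
  rw [hset, gnp, Measure.pi_pi]
  have hcongr : ∀ i : {e : Sym2 (Fin n) // ¬ e.IsDiag},
      bern p (if (i : Sym2 (Fin n)) ∈ S then ({true} : Set Bool) else Set.univ)
        = if (i : Sym2 (Fin n)) ∈ S then ENNReal.ofReal p else 1 := by
    intro i; split_ifs with h; exacts [hbt, hbu]
  rw [Finset.prod_congr rfl (fun i _ => hcongr i), Finset.prod_ite, Finset.prod_const,
    Finset.prod_const_one, mul_one]
  congr 1
  apply Finset.card_bij (fun (i : {e : Sym2 (Fin n) // ¬ e.IsDiag}) _ => (i : Sym2 (Fin n)))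
  · intro i hi
    simpa using (Finset.mem_filter.1 hi).2
  · intro i hi j hj hij
    exact Subtype.ext hij
  · intro e he
    exact ⟨⟨e, hS e he⟩, Finset.mem_filter.2 ⟨Finset.mem_univ _, he⟩, rfl⟩

/-- the pool of candidate edges -/
def poolAB {n : ℕ} (AB : Finset (Fin n) × Finset (Fin n)) : Finset (Sym2 (Fin n)) :=
  (AB.1 ×ˢ AB.2).image fun q => s(q.1, q.2)

noncomputable def KK (n : ℕ) (p : ℝ) (a : ℕ) : ℕ := ⌈(n : ℝ) * p / 100 * a⌉₊

def condAB (n : ℕ) (p : ℝ) (AB : Finset (Fin n) × Finset (Fin n)) : Prop :=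
  Disjoint AB.1 AB.2 ∧ 0 < AB.1.card ∧
    (AB.1.card : ℝ) ≤ 160 * Real.log ((n : ℝ) * p) / p ∧
    (AB.2.card : ℝ) ≤ (n : ℝ) * p / (10 ^ 6 * Real.log ((n : ℝ) * p)) * AB.1.card

noncomputable def famA (n : ℕ) (p : ℝ) : Finset (Finset (Fin n) × Finset (Fin n)) :=
  @Finset.filter _ (condAB n p) (Classical.decPred _) Finset.univ

lemma mem_famA {AB : Finset (Fin n) × Finset (Fin n)} :
    AB ∈ famA n p ↔ condAB n p AB := by
  letI := Classical.decPred (condAB n p)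
  unfold famA
  rw [Finset.mem_filter]
  simp

lemma cover (hω : ∃ A B : Set (Fin n), Disjoint A B ∧
      0 < A.ncard ∧
      (A.ncard : ℝ) ≤ 160 * Real.log (n * p) / p ∧
      (B.ncard : ℝ) ≤ (n * p / (10 ^ 6 * Real.log (n * p))) * A.ncard ∧
      (n * p / 100) * A.ncard ≤ edgesBetween (graphOf ω) A B) :
    ω ∈ ⋃ AB ∈ famA n p, ⋃ S ∈ (poolAB AB).powersetCard (KK n p AB.1.card), cylSet n S := by
  classical
  obtain ⟨A, B, hdisj, hA0, hAm, hBd, hE⟩ := hω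
  have hAfin : A.Finite := Set.toFinite A
  have hBfin : B.Finite := Set.toFinite B
  set FA := hAfin.toFinset with hFAdef
  set FB := hBfin.toFinset with hFBdef
  have hcardA : A.ncard = FA.card := Set.ncard_eq_toFinset_card A hAfin
  have hcardB : B.ncard = FB.card := Set.ncard_eq_toFinset_card B hBfin
  have hdisjF : Disjoint FA FB := by
    rw [hFAdef, hFBdef, Set.Finite.disjoint_toFinset]
    exact hdisj
  set F := (FA ×ˢ FB).filter (fun q => (graphOf ω).Adj q.1 q.2) with hFdef
  have hFcard : edgesBetween (graphOf ω) A B = F.card := by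
    rw [edgesBetween]
    have hFeq : {q : Fin n × Fin n | q.1 ∈ A ∧ q.2 ∈ B ∧ (graphOf ω).Adj q.1 q.2} = ↑F := by
      ext q
      simp only [hFdef, Set.mem_setOf_eq, Finset.coe_filter, Finset.mem_product,
        hFAdef, hFBdef, Set.Finite.mem_toFinset]
      tauto
    rw [hFeq, Set.ncard_coe_finset]
  have hkF : KK n p FA.card ≤ F.card := by
    apply Nat.ceil_le.2
    rw [← hFcard]
    rw [hcardA] at hE
    exact_mod_cast hE
  obtain ⟨F', hF'sub, hF'card⟩ := Finset.exists_subset_card_eq hkF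
  have hF'mem : ∀ q ∈ F', q.1 ∈ FA ∧ q.2 ∈ FB := by
    intro q hq
    have := (Finset.mem_filter.1 (hF'sub hq)).1
    exact Finset.mem_product.1 this
  refine Set.mem_biUnion (show (FA, FB) ∈ famA n p from ?_) ?_
  · rw [mem_famA]
    refine ⟨hdisjF, ?_, ?_, ?_⟩
    · rw [← hcardA]; exact hA0
    · rw [← hcardA]; exact_mod_cast hAm
    · rw [← hcardA, ← hcardB]; exact_mod_cast hBd
  · refine Set.mem_biUnion (show (F'.image fun q => s(q.1, q.2)) ∈
        (poolAB (FA, FB)).powersetCard (KK n p (FA, FB).1.card) from ?_) ?_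
    · rw [Finset.mem_powersetCard]
      constructor
      · refine Finset.image_subset_image ?_
        exact hF'sub.trans (Finset.filter_subset _ _)
      · rw [Finset.card_image_of_injOn, hF'card]
        intro q hq q' hq' heq
        rw [Finset.mem_coe] at hq hq'
        obtain ⟨hq1, hq2⟩ := hF'mem q hq
        obtain ⟨hq1', hq2'⟩ := hF'mem q' hq'
        rcases Sym2.eq_iff.1 heq with ⟨h1, h2⟩ | ⟨h1, h2⟩
        · exact Prod.ext h1 h2
        · exact absurd (h1 ▸ hq2') (Finset.disjoint_left.1 hdisjF hq1)
    · intro e he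
      simp only [Finset.mem_coe, Finset.mem_image] at he
      obtain ⟨q, hq, rfl⟩ := he
      intro hd
      have hadj : (graphOf ω).Adj q.1 q.2 := (Finset.mem_filter.1 (hF'sub hq)).2
      rw [graphOf, SimpleGraph.fromEdgeSet_adj] at hadj
      obtain ⟨hh, hωtrue⟩ := hadj.1
      exact hωtrue

end measurepart

set_option maxHeartbeats 2000000 in
/-- Suppose `10^8/n ≤ p ≤ (log n)³/n`, and set `d = np/(10^6·log(np))`,
`m = 160·log(np)/p` and `D = np/100`.  Then with probability `1 − o(n^{−2})`
(uniformly over all such `p`), `G = G(n,p)` contains no two disjoint vertex sets `A`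
and `B` with `0 < |A| ≤ m`, `|B| ≤ d·|A|` and at least `D·|A|` edges between them. -/
theorem statement_15 :
    ∀ ε : ℝ, 0 < ε → ∃ N : ℕ, ∀ n : ℕ, N ≤ n → ∀ p : ℝ,
      (10 : ℝ) ^ 8 / n ≤ p → p ≤ (Real.log n) ^ 3 / n →
      gnp n p
        {ω | ∃ A B : Set (Fin n), Disjoint A B ∧
          0 < A.ncard ∧
          (A.ncard : ℝ) ≤ 160 * Real.log (n * p) / p ∧
          (B.ncard : ℝ) ≤ (n * p / (10 ^ 6 * Real.log (n * p))) * A.ncard ∧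
          (n * p / 100) * A.ncard ≤ edgesBetween (graphOf ω) A B}
        ≤ ENNReal.ofReal (ε / n ^ 2) := by
  intro ε hε
  refine ⟨⌈4 / ε⌉₊ + 1, fun n hn p hp1 hp2 => ?_⟩
  classical
  have hn1 : 1 ≤ n := le_trans (by omega) hn
  have hn0 : (0 : ℝ) < n := by exact_mod_cast hn1
  have hp0 : 0 < p := lt_of_lt_of_le (by positivity) hp1
  have hP : 10 ^ 8 ≤ (n : ℝ) * p := by
    calc (10 : ℝ) ^ 8 = 10 ^ 8 / n * n := by field_simp
      _ ≤ p * n := mul_le_mul_of_nonneg_right hp1 hn0.le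
      _ = (n : ℝ) * p := mul_comm _ _
  have hP2 : (n : ℝ) * p ≤ Real.log n ^ 3 := by
    calc (n : ℝ) * p ≤ n * (Real.log n ^ 3 / n) := mul_le_mul_of_nonneg_left hp2 hn0.le
      _ = Real.log n ^ 3 := by field_simp
  have hP0 : (0 : ℝ) < n * p := lt_of_lt_of_le (by norm_num) hP
  have hln400 : (400 : ℝ) ≤ Real.log n := by
    have hcube : (10 : ℝ) ^ 8 ≤ Real.log n ^ 3 := le_trans hP hP2
    nlinarith [hcube, sq_nonneg (Real.log n + 200), sq_nonneg (Real.log n - 400),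
      sq_nonneg (Real.log n)]
  have hlncube : Real.log n ^ 3 ≤ n := by
    have hX4 : Real.log n / 4 + 1 ≤ Real.exp (Real.log n / 4) := Real.add_one_le_exp _
    have hE4 : (n : ℝ) = Real.exp (Real.log n / 4) ^ 4 := by
      rw [← Real.exp_nat_mul]
      rw [show ((4 : ℕ) : ℝ) * (Real.log n / 4) = Real.log n by push_cast; ring]
      exact (Real.exp_log hn0).symm
    have h5 : (Real.log n / 4) ^ 4 ≤ Real.exp (Real.log n / 4) ^ 4 :=
      pow_le_pow_left₀ (by linarith) (by linarith) 4
    have h7 : 0 ≤ Real.log n * Real.log n * Real.log n * (Real.log n - 256) := by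
      apply mul_nonneg (by positivity) (by linarith)
    have h6 : Real.log n ^ 3 ≤ (Real.log n / 4) ^ 4 := by nlinarith [h7]
    linarith [h6.trans h5, hE4.ge, hE4.le]
  have hp1' : p ≤ 1 := le_trans hp2 (by rw [div_le_one hn0]; exact hlncube)
  have hmeas1 : gnp n p
        {ω | ∃ A B : Set (Fin n), Disjoint A B ∧
          0 < A.ncard ∧
          (A.ncard : ℝ) ≤ 160 * Real.log (n * p) / p ∧
          (B.ncard : ℝ) ≤ (n * p / (10 ^ 6 * Real.log (n * p))) * A.ncard ∧
          (n * p / 100) * A.ncard ≤ edgesBetween (graphOf ω) A B}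
      ≤ ∑ AB ∈ famA n p, ∑ S ∈ (poolAB AB).powersetCard (KK n p AB.1.card),
          gnp n p (cylSet n S) := by
    have hsub : {ω : {e : Sym2 (Fin n) // ¬ e.IsDiag} → Bool | ∃ A B : Set (Fin n),
          Disjoint A B ∧
          0 < A.ncard ∧
          (A.ncard : ℝ) ≤ 160 * Real.log (n * p) / p ∧
          (B.ncard : ℝ) ≤ (n * p / (10 ^ 6 * Real.log (n * p))) * A.ncard ∧
          (n * p / 100) * A.ncard ≤ edgesBetween (graphOf ω) A B}
        ⊆ ⋃ AB ∈ famA n p, ⋃ S ∈ (poolAB AB).powersetCard (KK n p AB.1.card), cylSet n S :=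
      fun ω hω => cover hω
    refine le_trans (measure_mono hsub) ?_
    refine le_trans (measure_biUnion_finset_le _ _) ?_
    exact Finset.sum_le_sum fun AB _ => measure_biUnion_finset_le _ _
  have hmeas2 : ∀ AB ∈ famA n p,
      (∑ S ∈ (poolAB AB).powersetCard (KK n p AB.1.card), gnp n p (cylSet n S))
      ≤ ENNReal.ofReal (((AB.1.card * AB.2.card).choose (KK n p AB.1.card) : ℝ)
          * p ^ (KK n p AB.1.card)) := by
    intro AB hAB
    obtain ⟨hdisj, hA0, hAm, hBd⟩ := mem_famA.1 hAB
    have hpool : ∀ e ∈ poolAB AB, ¬ e.IsDiag := by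
      intro e he
      obtain ⟨q, hq, rfl⟩ := Finset.mem_image.1 he
      rw [Finset.mem_product] at hq
      rw [Sym2.mk_isDiag_iff]
      intro hqq
      exact (Finset.disjoint_left.1 hdisj hq.1) (hqq ▸ hq.2)
    have heach : ∀ S ∈ (poolAB AB).powersetCard (KK n p AB.1.card),
        gnp n p (cylSet n S) = ENNReal.ofReal p ^ (KK n p AB.1.card) := by
      intro S hS
      obtain ⟨hsub, hcard⟩ := Finset.mem_powersetCard.1 hS
      rw [cyl_measure n p hp0.le hp1' S (fun e he => hpool e (hsub he)), hcard]
    rw [Finset.sum_congr rfl heach, Finset.sum_const, Finset.card_powersetCard, nsmul_eq_mul]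
    have hpc : (poolAB AB).card ≤ AB.1.card * AB.2.card :=
      le_trans Finset.card_image_le (le_of_eq (Finset.card_product _ _))
    have hchoose : (((poolAB AB).card.choose (KK n p AB.1.card) : ℕ) : ENNReal)
        ≤ (((AB.1.card * AB.2.card).choose (KK n p AB.1.card) : ℕ) : ENNReal) := by
      exact_mod_cast Nat.choose_le_choose _ hpc
    calc (((poolAB AB).card.choose (KK n p AB.1.card) : ℕ) : ENNReal)
          * ENNReal.ofReal p ^ (KK n p AB.1.card)
        ≤ (((AB.1.card * AB.2.card).choose (KK n p AB.1.card) : ℕ) : ENNReal)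
          * ENNReal.ofReal p ^ (KK n p AB.1.card) := mul_le_mul_left hchoose _
      _ = ENNReal.ofReal (((AB.1.card * AB.2.card).choose (KK n p AB.1.card) : ℝ)
          * p ^ (KK n p AB.1.card)) := by
          rw [ENNReal.ofReal_mul (by positivity), ENNReal.ofReal_pow hp0.le,
            ENNReal.ofReal_natCast]
  have hcardle : ∀ s : Finset (Fin n), s.card ≤ n := fun s =>
    le_trans (Finset.card_le_univ s) (by simp)
  have hper : ∀ AB ∈ famA n p,
      ((AB.1.card * AB.2.card).choose (KK n p AB.1.card) : ℝ) * p ^ (KK n p AB.1.card)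
      ≤ Real.exp (-6 * Real.log n)
        * ((n.choose AB.1.card : ℝ)⁻¹ * (n.choose AB.2.card : ℝ)⁻¹) := by
    intro AB hAB
    obtain ⟨hdisj, hA0, hAm, hBd⟩ := mem_famA.1 hAB
    have hca : (0 : ℝ) < (n.choose AB.1.card : ℝ) := by
      exact_mod_cast Nat.choose_pos (hcardle AB.1)
    have hcb : (0 : ℝ) < (n.choose AB.2.card : ℝ) := by
      exact_mod_cast Nat.choose_pos (hcardle AB.2)
    have htb := term_bound (n := n) (a := AB.1.card) (b := AB.2.card) hp0 hP hP2 hA0 hAm hBd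
    have h4 : (((AB.1.card * AB.2.card).choose (KK n p AB.1.card) : ℝ)
          * p ^ (KK n p AB.1.card))
        * ((n.choose AB.1.card : ℝ) * (n.choose AB.2.card : ℝ))
        ≤ Real.exp (-6 * Real.log n) := by
      calc (((AB.1.card * AB.2.card).choose (KK n p AB.1.card) : ℝ)
            * p ^ (KK n p AB.1.card))
          * ((n.choose AB.1.card : ℝ) * (n.choose AB.2.card : ℝ))
          = (n.choose AB.1.card : ℝ) * (n.choose AB.2.card : ℝ)
            * ((AB.1.card * AB.2.card).choose (KK n p AB.1.card) : ℝ)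
            * p ^ (KK n p AB.1.card) := by ring
        _ ≤ Real.exp (-6 * Real.log n) := htb
    calc ((AB.1.card * AB.2.card).choose (KK n p AB.1.card) : ℝ) * p ^ (KK n p AB.1.card)
        = (((AB.1.card * AB.2.card).choose (KK n p AB.1.card) : ℝ)
            * p ^ (KK n p AB.1.card))
          * ((n.choose AB.1.card : ℝ) * (n.choose AB.2.card : ℝ))
          * ((n.choose AB.1.card : ℝ)⁻¹ * (n.choose AB.2.card : ℝ)⁻¹) := by
          field_simp
      _ ≤ Real.exp (-6 * Real.log n)
          * ((n.choose AB.1.card : ℝ)⁻¹ * (n.choose AB.2.card : ℝ)⁻¹) :=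
          mul_le_mul_of_nonneg_right h4 (by positivity)
  have hinvsum : ∑ A : Finset (Fin n), ((n.choose A.card : ℝ))⁻¹ = n + 1 := by
    rw [← Finset.powerset_univ, Finset.sum_powerset_apply_card (fun j => ((n.choose j : ℝ))⁻¹),
      Finset.card_univ, Fintype.card_fin]
    calc ∑ m ∈ Finset.range (n + 1), (n.choose m) • ((n.choose m : ℝ))⁻¹
        = ∑ m ∈ Finset.range (n + 1), (1 : ℝ) := by
          refine Finset.sum_congr rfl fun m hm => ?_
          rw [nsmul_eq_mul, mul_inv_cancel₀]
          exact_mod_cast (Nat.choose_pos (Nat.lt_succ_iff.1 (Finset.mem_range.1 hm))).ne'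
      _ = n + 1 := by simp
  have hreal : ∑ AB ∈ famA n p, (((AB.1.card * AB.2.card).choose (KK n p AB.1.card) : ℝ)
      * p ^ (KK n p AB.1.card)) ≤ ε / n ^ 2 := by
    have hstep : ∑ AB ∈ famA n p, (((AB.1.card * AB.2.card).choose (KK n p AB.1.card) : ℝ)
          * p ^ (KK n p AB.1.card))
        ≤ ∑ AB : Finset (Fin n) × Finset (Fin n),
            Real.exp (-6 * Real.log n)
              * ((n.choose AB.1.card : ℝ)⁻¹ * (n.choose AB.2.card : ℝ)⁻¹) := by
      refine le_trans (Finset.sum_le_sum hper) ?_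
      exact Finset.sum_le_sum_of_subset_of_nonneg (Finset.subset_univ _)
        (fun _ _ _ => by positivity)
    have hfact : ∑ AB : Finset (Fin n) × Finset (Fin n),
        Real.exp (-6 * Real.log n)
          * ((n.choose AB.1.card : ℝ)⁻¹ * (n.choose AB.2.card : ℝ)⁻¹)
        = Real.exp (-6 * Real.log n) * (((n : ℝ) + 1) * ((n : ℝ) + 1)) := by
      rw [← Finset.univ_product_univ, Finset.sum_product]
      have h1 : ∀ A : Finset (Fin n), (∑ B : Finset (Fin n),
          Real.exp (-6 * Real.log n)
            * ((n.choose A.card : ℝ)⁻¹ * (n.choose B.card : ℝ)⁻¹))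
          = Real.exp (-6 * Real.log n) * (n.choose A.card : ℝ)⁻¹ * ((n : ℝ) + 1) := by
        intro A
        calc (∑ B : Finset (Fin n), Real.exp (-6 * Real.log n)
              * ((n.choose A.card : ℝ)⁻¹ * (n.choose B.card : ℝ)⁻¹))
            = ∑ B : Finset (Fin n), (Real.exp (-6 * Real.log n)
              * (n.choose A.card : ℝ)⁻¹) * (n.choose B.card : ℝ)⁻¹ :=
              Finset.sum_congr rfl fun B _ => by ring
          _ = (Real.exp (-6 * Real.log n) * (n.choose A.card : ℝ)⁻¹)
              * ∑ B : Finset (Fin n), (n.choose B.card : ℝ)⁻¹ := by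
              rw [Finset.mul_sum]
          _ = Real.exp (-6 * Real.log n) * (n.choose A.card : ℝ)⁻¹ * ((n : ℝ) + 1) := by
              rw [hinvsum]
      rw [Finset.sum_congr rfl fun A _ => h1 A]
      calc ∑ A : Finset (Fin n),
            Real.exp (-6 * Real.log n) * (n.choose A.card : ℝ)⁻¹ * ((n : ℝ) + 1)
          = (Real.exp (-6 * Real.log n) * ((n : ℝ) + 1))
            * ∑ A : Finset (Fin n), (n.choose A.card : ℝ)⁻¹ := by
            rw [Finset.mul_sum]
            exact Finset.sum_congr rfl fun A _ => by ring
        _ = Real.exp (-6 * Real.log n) * (((n : ℝ) + 1) * ((n : ℝ) + 1)) := by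
            rw [hinvsum]; ring
    have hE : Real.exp (-6 * Real.log n) = (((n : ℝ)) ^ 6)⁻¹ := by
      rw [show (-6 : ℝ) * Real.log n = -(((6 : ℕ) : ℝ) * Real.log n) by push_cast; ring,
        Real.exp_neg, Real.exp_nat_mul, Real.exp_log hn0]
    have hεn : 4 ≤ ε * n := by
      have h1 : (4 / ε : ℝ) ≤ ⌈(4 : ℝ) / ε⌉₊ := Nat.le_ceil _
      have h2 : ((⌈(4 : ℝ) / ε⌉₊ : ℕ) : ℝ) + 1 ≤ n := by exact_mod_cast hn
      calc (4 : ℝ) = ε * (4 / ε) := by field_simp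
        _ ≤ ε * n := mul_le_mul_of_nonneg_left (by linarith) hε.le
    have hn1' : (1 : ℝ) ≤ n := by exact_mod_cast hn1
    have hfin : (((n : ℝ)) ^ 6)⁻¹ * (((n : ℝ) + 1) * ((n : ℝ) + 1)) ≤ ε / n ^ 2 := by
      rw [inv_mul_eq_div, div_le_div_iff₀ (by positivity) (by positivity)]
      have h2n : (n : ℝ) + 1 ≤ 2 * n := by linarith
      calc ((n : ℝ) + 1) * ((n : ℝ) + 1) * (n : ℝ) ^ 2
          ≤ (2 * n) * (2 * n) * (n : ℝ) ^ 2 := by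
            apply mul_le_mul (mul_le_mul h2n h2n (by positivity) (by positivity))
              le_rfl (by positivity) (by positivity)
        _ = 4 * (n : ℝ) ^ 4 := by ring
        _ ≤ (ε * n) * (n : ℝ) ^ 4 := mul_le_mul_of_nonneg_right hεn (by positivity)
        _ = ε * (n : ℝ) ^ 5 := by ring
        _ ≤ ε * (n : ℝ) ^ 6 := by
            have h56 : (n : ℝ) ^ 5 ≤ (n : ℝ) ^ 6 := pow_le_pow_right₀ hn1' (by norm_num)
            exact mul_le_mul_of_nonneg_left h56 hε.le
    calc ∑ AB ∈ famA n p, (((AB.1.card * AB.2.card).choose (KK n p AB.1.card) : ℝ)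
          * p ^ (KK n p AB.1.card))
        ≤ ∑ AB : Finset (Fin n) × Finset (Fin n),
            Real.exp (-6 * Real.log n)
              * ((n.choose AB.1.card : ℝ)⁻¹ * (n.choose AB.2.card : ℝ)⁻¹) := hstep
      _ = Real.exp (-6 * Real.log n) * (((n : ℝ) + 1) * ((n : ℝ) + 1)) := hfact
      _ = (((n : ℝ)) ^ 6)⁻¹ * (((n : ℝ) + 1) * ((n : ℝ) + 1)) := by rw [hE]
      _ ≤ ε / n ^ 2 := hfin
  refine le_trans hmeas1 (le_trans (Finset.sum_le_sum hmeas2) ?_)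
  rw [← ENNReal.ofReal_sum_of_nonneg (fun AB _ => by positivity)]
  exact ENNReal.ofReal_le_ofReal hreal
end
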